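/- arXiv:1206.4912 — 10 statements merged into one kernel-verified Lean document; each statement's English description precedes it below -/
import Mathlib

section
/- If a graph G contains a graph H as a minor, then there is a subgraph G* of G that still contains H as a minor and that satisfies Δ(G*) ≤ Δ(H) and |V(G*)| ≤ |V(H)| + vc(G*)·(Δ(H) + 1). -/
open SimpleGraph

universe u v

/-- `X` is a vertex cover of the graph `G`: every edge has an endpoint in `X`. -/
def IsVertexCover {V : Type*} (G : SimpleGraph V) (X : Set V) : Prop :=
  ∀ ⦃a b : V⦄, G.Adj a b → a ∈ X ∨ b ∈ X

/-- The minimum size of a vertex cover of `G`. -/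
noncomputable def vcNum {V : Type*} (G : SimpleGraph V) : ℕ :=
  sInf {n : ℕ | ∃ X : Set V, _root_.IsVertexCover G X ∧ X.ncard = n}

/-- The maximum degree of a vertex of `G`. -/
noncomputable def maxDeg {V : Type*} (G : SimpleGraph V) : ℕ :=
  ⨆ x : V, (G.neighborSet x).ncard

/-- `H` is a minor of `G`: there is a minor model assigning to each vertex of `H`
a nonempty branch set in `G`, pairwise disjoint, each inducing a connected subgraph,
with an edge of `G` between the branch sets of any two adjacent vertices of `H`. -/
def HasMinor {V : Type u} {W : Type v} (G : SimpleGraph V) (H : SimpleGraph W) : Prop :=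
  ∃ φ : W → Set V,
    (∀ w, (φ w).Nonempty) ∧
    (Pairwise fun w w' => Disjoint (φ w) (φ w')) ∧
    (∀ w, (G.induce (φ w)).Connected) ∧
    ∀ ⦃w w'⦄, H.Adj w w' → ∃ a ∈ φ w, ∃ b ∈ φ w', G.Adj a b

/-!
Take a minor model of `H` whose branch sets have the smallest total size, choose a spanning tree
of each branch set and one edge of `G` for each edge of `H`, and let `G*` be the union of these
trees and edges. By minimality, a leaf `u` of the tree at `w` cannot be deleted from its branch set,
so some edge `ww'` of `H` is realised only at `u`: distinct leaves thus use up distinct edges of `H`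
at `w`, disjoint from those realised at any other vertex `x` of the branch set. Since in a tree the
degree of `x` is at most the number of leaves other than `x`, the degree of `x` in `G*` is at most
`deg_H w`. Finally, an isolated vertex of `G*` is a one-vertex branch set, and every other vertex
lies in a minimum vertex cover or is adjacent to it.
-/

open Function

section Degrees

variable {α : Type*} (G : SimpleGraph α)

lemma ncard_neighborSet_le_maxDeg [Finite α] (x : α) : (G.neighborSet x).ncard ≤ maxDeg G :=
  le_ciSup (f := fun x => (G.neighborSet x).ncard) (Set.finite_range _).bddAbove x

lemma maxDeg_le {m : ℕ} (h : ∀ x, (G.neighborSet x).ncard ≤ m) : maxDeg G ≤ m := by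
  cases isEmpty_or_nonempty α
  · simp [maxDeg]
  · exact ciSup_le h

lemma SimpleGraph.Subgraph.maxDeg_coe_le {G' : G.Subgraph} {m : ℕ}
    (h : ∀ x ∈ G'.verts, (G'.neighborSet x).ncard ≤ m) : maxDeg G'.coe ≤ m :=
  maxDeg_le _ fun x => by
    rw [← Nat.card_coe_set_eq, Nat.card_congr (G'.coeNeighborSetEquiv x),
      Nat.card_coe_set_eq]
    exact h x x.2

lemma exists_isVertexCover_ncard_eq_vcNum :
    ∃ X, _root_.IsVertexCover G X ∧ X.ncard = vcNum G :=
  Nat.sInf_mem (s := {n | ∃ X : Set α, _root_.IsVertexCover G X ∧ X.ncard = n})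
    ⟨_, Set.univ, fun _ _ _ => Or.inl trivial, rfl⟩

lemma card_le_ncard_isIsolated_add_vcNum_mul [Finite α] :
    Nat.card α ≤ {v | G.IsIsolated v}.ncard + vcNum G * (maxDeg G + 1) := by
  obtain ⟨X, hX, hXcard⟩ := exists_isVertexCover_ncard_eq_vcNum G
  have hXfin := X.toFinite
  have hsupp : {v | G.IsIsolated v}ᶜ ⊆ ⋃ u ∈ hXfin.toFinset, insert u (G.neighborSet u) := by
    intro v hv
    obtain ⟨y, hy⟩ : ∃ y, G.Adj v y := by simpa [SimpleGraph.IsIsolated] using hv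
    simp only [Set.Finite.mem_toFinset, Set.mem_iUnion, Set.mem_insert_iff,
      SimpleGraph.mem_neighborSet, exists_prop]
    rcases hX hy with hv | hy'
    · exact ⟨v, hv, Or.inl rfl⟩
    · exact ⟨y, hy', Or.inr hy.symm⟩
  calc Nat.card α = ({v | G.IsIsolated v} ∪ {v | G.IsIsolated v}ᶜ).ncard := by
        rw [Set.union_compl_self, Set.ncard_univ]
    _ ≤ {v | G.IsIsolated v}.ncard + {v | G.IsIsolated v}ᶜ.ncard := Set.ncard_union_le _ _
    _ ≤ {v | G.IsIsolated v}.ncard + ∑ u ∈ hXfin.toFinset, (maxDeg G + 1) := by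
        gcongr
        refine (Set.ncard_le_ncard hsupp).trans ((Finset.set_ncard_biUnion_le _ _).trans ?_)
        gcongr with u
        exact (Set.ncard_insert_le _ _).trans (by simpa using ncard_neighborSet_le_maxDeg G u)
    _ = {v | G.IsIsolated v}.ncard + vcNum G * (maxDeg G + 1) := by
        rw [Finset.sum_const, smul_eq_mul, ← Set.ncard_eq_toFinset_card _ hXfin, hXcard]

end Degrees

lemma Set.ncard_sep_add_ncard_le_of_subset_image {β γ : Type*} {f : β → γ} {s : Set β}
    (hs : s.Finite) {c : γ} {L : Set γ} (hc : c ∉ L) (hL : L ⊆ f '' s) :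
    {b ∈ s | f b = c}.ncard + L.ncard ≤ s.ncard := by
  have hLs : L ⊆ f '' (s ∩ f ⁻¹' L) := by
    rintro y hy
    obtain ⟨b, hb, rfl⟩ := hL hy
    exact ⟨b, ⟨hb, hy⟩, rfl⟩
  have hdisj : Disjoint {b ∈ s | f b = c} (s ∩ f ⁻¹' L) :=
    Set.disjoint_left.mpr fun b hb hb' => hc (hb.2 ▸ hb'.2)
  calc {b ∈ s | f b = c}.ncard + L.ncard
      ≤ {b ∈ s | f b = c}.ncard + (s ∩ f ⁻¹' L).ncard := by
        gcongr
        exact (Set.ncard_le_ncard hLs ((hs.inter_of_left _).image f)).trans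
          (Set.ncard_image_le (hs.inter_of_left _))
    _ = ({b ∈ s | f b = c} ∪ (s ∩ f ⁻¹' L)).ncard :=
        (Set.ncard_union_eq hdisj (hs.subset (Set.sep_subset _ _)) (hs.inter_of_left _)).symm
    _ ≤ s.ncard := Set.ncard_le_ncard (Set.union_subset (Set.sep_subset _ _)
        Set.inter_subset_left) hs

namespace SimpleGraph

variable {α : Type*}

lemma ncard_neighborSet_eq_degree (G : SimpleGraph α) (x : α) [Fintype (G.neighborSet x)] :
    (G.neighborSet x).ncard = G.degree x := by
  rw [Set.ncard_eq_toFinset_card', Set.toFinset_card, card_neighborSet_eq_degree]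

lemma IsTree.ncard_neighborSet_le_ncard_leaves [Finite α] {T : SimpleGraph α} (hT : T.IsTree)
    (v : α) : (T.neighborSet v).ncard ≤ {u | u ≠ v ∧ (T.neighborSet u).ncard = 1}.ncard := by
  classical
  have := Fintype.ofFinite α
  rcases subsingleton_or_nontrivial α with hα | hα
  · simp
  simp only [ncard_neighborSet_eq_degree]
  rw [Set.ncard_eq_toFinset_card', Set.toFinset_ofPred]
  have hsum : T.degree v + ∑ u ∈ Finset.univ.erase v, T.degree u = 2 * (Fintype.card α - 1) := by
    rw [Finset.add_sum_erase _ (fun u => T.degree u) (Finset.mem_univ v),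
      sum_degrees_eq_twice_card_edges, ← hT.card_edgeFinset, Nat.add_sub_cancel]
  have hleaves : ∑ u ∈ Finset.univ.erase v, 2 ≤
      ∑ u ∈ Finset.univ.erase v, (T.degree u + if T.degree u = 1 then 1 else 0) := by
    gcongr with u
    have := hT.connected.preconnected.degree_pos_of_nontrivial u
    split_ifs <;> omega
  rw [Finset.sum_add_distrib, Finset.sum_boole, Finset.sum_const, Finset.card_erase_of_mem
    (Finset.mem_univ v), Finset.card_univ, smul_eq_mul, Nat.cast_id] at hleaves
  have hL : ({u | u ≠ v ∧ T.degree u = 1} : Finset α) =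
      {u ∈ Finset.univ.erase v | T.degree u = 1} := by
    ext; simp
  rw [hL]
  omega

lemma IsTree.connected_induce_sdiff_singleton {G : SimpleGraph α} {s : Set α}
    {T : SimpleGraph s} (hT : T.IsTree) (hle : T ≤ G.induce s) {u : s}
    (hu : (T.neighborSet u).ncard = 1) : (G.induce (s \ {(u : α)})).Connected := by
  obtain ⟨a, ha⟩ := Set.ncard_eq_one.mp hu
  have hpre : (T.induce {u}ᶜ).Preconnected :=
    hT.connected.preconnected.induce_of_degree_eq_one fun v hv => by
      rw [Set.notMem_compl_iff, Set.mem_singleton_iff] at hv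
      exact hv ▸ ha ▸ Set.subsingleton_singleton
  let f : T.induce {u}ᶜ →g G.induce (s \ {(u : α)}) :=
    ⟨fun x => ⟨x.1.1, x.1.2, fun h => x.2 (Subtype.ext h)⟩, fun h => hle h⟩
  have hf : Surjective f := fun x => ⟨⟨⟨x.1, x.2.1⟩, fun h => x.2.2 (congrArg Subtype.val h)⟩, rfl⟩
  have hau : a ≠ u := (ha ▸ Set.mem_singleton a : a ∈ T.neighborSet u).ne.symm
  exact (connected_iff _).mpr ⟨hpre.map f hf, ⟨f ⟨a, hau⟩⟩⟩

end SimpleGraph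

variable {V W : Type*} {G : SimpleGraph V} {H : SimpleGraph W}

def IsMinorModel (G : SimpleGraph V) (H : SimpleGraph W) (φ : W → Set V) : Prop :=
  (∀ w, (φ w).Nonempty) ∧
    (Pairwise fun w w' => Disjoint (φ w) (φ w')) ∧
    (∀ w, (G.induce (φ w)).Connected) ∧
    ∀ ⦃w w'⦄, H.Adj w w' → ∃ a ∈ φ w, ∃ b ∈ φ w', G.Adj a b

def IsMinimumMinorModel [Fintype W] (G : SimpleGraph V) (H : SimpleGraph W) (φ : W → Set V) :
    Prop :=
  IsMinorModel G H φ ∧ ∀ ψ, IsMinorModel G H ψ → ∑ w, (φ w).ncard ≤ ∑ w, (ψ w).ncard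

lemma HasMinor.exists_isMinimumMinorModel [Finite V] [Fintype W] (h : HasMinor G H) :
    ∃ φ, IsMinimumMinorModel G H φ :=
  Set.exists_min_image {φ | IsMinorModel G H φ} (fun φ => ∑ w, (φ w).ncard) (Set.toFinite _) h

lemma IsMinorModel.update_sdiff_singleton [DecidableEq W] {φ : W → Set V}
    (hφ : IsMinorModel G H φ) {w : W} {u : V}
    (hconn : (G.induce (φ w \ {u})).Connected)
    (hadj : ∀ w', H.Adj w w' → ∃ a ∈ φ w \ {u}, ∃ b ∈ φ w', G.Adj a b) :
    IsMinorModel G H (update φ w (φ w \ {u})) := by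
  obtain ⟨-, hdisj, hconn', hedge⟩ := hφ
  have hsub : update φ w (φ w \ {u}) ≤ φ := update_le_self_iff.mpr Set.sdiff_subset
  have hc : ∀ w', (G.induce (update φ w (φ w \ {u}) w')).Connected := fun w' => by
    by_cases h : w' = w
    · rw [h, update_self]; exact hconn
    · rw [update_of_ne h]; exact hconn' w'
  refine ⟨fun w' => Set.nonempty_coe_sort.mp (hc w').nonempty,
    fun w₁ w₂ h => (hdisj h).mono (hsub w₁) (hsub w₂), hc, fun w₁ w₂ h12 => ?_⟩
  by_cases h₁ : w₁ = w <;> by_cases h₂ : w₂ = w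
  · exact absurd (h₁.trans h₂.symm) h12.ne
  · obtain ⟨a, ha, b, hb, hab⟩ := hadj w₂ (h₁ ▸ h12)
    exact ⟨a, by rwa [h₁, update_self], b, by rwa [update_of_ne h₂], hab⟩
  · obtain ⟨a, ha, b, hb, hab⟩ := hadj w₁ (h₂ ▸ h12.symm)
    exact ⟨b, by rwa [update_of_ne h₁], a, by rwa [h₂, update_self], hab.symm⟩
  · obtain ⟨a, ha, b, hb, hab⟩ := hedge h12
    exact ⟨a, by rwa [update_of_ne h₁], b, by rwa [update_of_ne h₂], hab⟩

lemma IsMinimumMinorModel.exists_adj_forall_adj_eq [Finite V] [Fintype W] {φ : W → Set V}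
    (hφ : IsMinimumMinorModel G H φ) {w : W} {u : V}
    (hu : u ∈ φ w) (hconn : (G.induce (φ w \ {u})).Connected) :
    ∃ w', H.Adj w w' ∧ ∀ a ∈ φ w, ∀ b ∈ φ w', G.Adj a b → a = u := by
  classical
  by_contra! hcon
  have hψ := hφ.1.update_sdiff_singleton hconn fun w' hw' => by
    obtain ⟨a, ha, b, hb, hab, hau⟩ := hcon w' hw'
    exact ⟨a, ⟨ha, hau⟩, b, hb, hab⟩
  refine (hφ.2 _ hψ).not_gt (Finset.sum_lt_sum
    (fun w' _ => Set.ncard_le_ncard ((update_le_self_iff.mpr Set.sdiff_subset :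
      update φ w (φ w \ {u}) ≤ φ) w'))
    ⟨w, Finset.mem_univ w, ?_⟩)
  simpa using Set.ncard_sdiff_singleton_lt_of_mem hu

/-- A minor model whose branch sets carry spanning trees, together with a choice of one edge of `G`
for each edge `ww'` of `H`: it joins `att w w' ∈ branch w` to `att w' w ∈ branch w'`. -/
structure TreeModel (G : SimpleGraph V) (H : SimpleGraph W) where
  branch : W → Set V
  tree : ∀ w, SimpleGraph (branch w)
  att : W → W → V
  pairwise_disjoint : Pairwise fun w w' => Disjoint (branch w) (branch w')
  isTree : ∀ w, (tree w).IsTree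
  tree_le : ∀ w, tree w ≤ G.induce (branch w)
  att_mem : ∀ w w', att w w' ∈ branch w
  adj_att : ∀ ⦃w w'⦄, H.Adj w w' → G.Adj (att w w') (att w' w)

lemma IsMinorModel.exists_treeModel {φ : W → Set V} (hφ : IsMinorModel G H φ) :
    ∃ M : TreeModel G H, M.branch = φ := by
  classical
  let _ : LinearOrder W := WellOrderingRel.isWellOrder.linearOrder
  obtain ⟨hne, hdisj, hconn, hedge⟩ := hφ
  choose T hTle hT using fun w => (hconn w).exists_isTree_le
  choose a ha b hb hab using fun w w' (h : H.Adj w w') => hedge h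
  -- orienting each edge of `H` by the order makes `att w w'` and `att w' w` come from one choice
  let att w w' : V :=
    if h : H.Adj w w' then if w < w' then a w w' h else b w' w h.symm else (hne w).some
  refine ⟨⟨φ, T, att, hdisj, hT, hTle, fun w w' => ?_, fun w w' h => ?_⟩, rfl⟩
  · by_cases h : H.Adj w w'
    · by_cases hlt : w < w'
      · simpa [att, h, hlt] using ha w w' h
      · simpa [att, h, hlt] using hb w' w h.symm
    · simpa [att, h] using (hne w).some_mem
  · rcases lt_or_gt_of_ne h.ne with hlt | hlt
    · simpa [att, h, h.symm, hlt, hlt.not_gt] using hab w w' h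
    · simpa [att, h, h.symm, hlt, hlt.not_gt] using (hab w' w h.symm).symm

namespace TreeModel

variable (M : TreeModel G H)

def toSubgraph : G.Subgraph where
  verts := ⋃ w, M.branch w
  Adj x y :=
    (∃ w, ∃ (hx : x ∈ M.branch w) (hy : y ∈ M.branch w), (M.tree w).Adj ⟨x, hx⟩ ⟨y, hy⟩) ∨
      ∃ w w', H.Adj w w' ∧ x = M.att w w' ∧ y = M.att w' w
  adj_sub := by
    rintro x y (⟨w, hx, hy, h⟩ | ⟨w, w', h, rfl, rfl⟩)
    · exact M.tree_le w h
    · exact M.adj_att h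
  edge_vert := by
    rintro x y (⟨w, hx, -, -⟩ | ⟨w, w', -, rfl, -⟩)
    · exact Set.mem_iUnion_of_mem w hx
    · exact Set.mem_iUnion_of_mem w (M.att_mem w w')
  symm := by
    constructor
    rintro x y (⟨w, hx, hy, h⟩ | ⟨w, w', h, rfl, rfl⟩)
    · exact Or.inl ⟨w, hy, hx, h.symm⟩
    · exact Or.inr ⟨w', w, h.symm, rfl, rfl⟩

lemma mem_toSubgraph_verts {w : W} {x : V} (hx : x ∈ M.branch w) : x ∈ M.toSubgraph.verts :=
  Set.mem_iUnion_of_mem w hx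

lemma eq_of_mem_branch {w w' : W} {x : V} (hx : x ∈ M.branch w) (hx' : x ∈ M.branch w') :
    w = w' :=
  by_contra fun h => Set.disjoint_left.mp (M.pairwise_disjoint h) hx hx'

lemma hasMinor_toSubgraph : HasMinor M.toSubgraph.coe H := by
  let treeHom w : M.tree w →g M.toSubgraph.coe.induce {x | ↑x ∈ M.branch w} :=
    ⟨fun x => ⟨⟨x, M.mem_toSubgraph_verts x.2⟩, x.2⟩, fun h => Or.inl ⟨w, _, _, h⟩⟩
  refine ⟨fun w => {x | ↑x ∈ M.branch w}, fun w => ?_, fun w w' h => ?_, fun w => ?_,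
    fun w w' h => ?_⟩
  · obtain ⟨x⟩ := (M.isTree w).connected.nonempty
    exact ⟨_, (treeHom w x).2⟩
  · exact Set.disjoint_left.mpr fun x hx hx' => h (M.eq_of_mem_branch hx hx')
  · exact (M.isTree w).connected.map (treeHom w) fun x => ⟨⟨x.1, x.2⟩, rfl⟩
  · exact ⟨⟨_, M.mem_toSubgraph_verts (M.att_mem w w')⟩, M.att_mem w w',
      ⟨_, M.mem_toSubgraph_verts (M.att_mem w' w)⟩, M.att_mem w' w, Or.inr ⟨w, w', h, rfl, rfl⟩⟩

lemma ncard_neighborSet_toSubgraph_le [Finite V] [Finite W] {w : W} {x : V}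
    (hx : x ∈ M.branch w) :
    (M.toSubgraph.neighborSet x).ncard ≤
      ((M.tree w).neighborSet ⟨x, hx⟩).ncard + {w' ∈ H.neighborSet w | M.att w w' = x}.ncard := by
  have hsub : M.toSubgraph.neighborSet x ⊆ Subtype.val '' (M.tree w).neighborSet ⟨x, hx⟩ ∪
      (fun w' => M.att w' w) '' {w' ∈ H.neighborSet w | M.att w w' = x} := by
    rintro y (⟨w₁, hx₁, hy, h⟩ | ⟨w₁, w', h, rfl, rfl⟩)
    · obtain rfl := M.eq_of_mem_branch hx₁ hx
      exact Or.inl ⟨⟨y, hy⟩, h, rfl⟩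
    · obtain rfl := M.eq_of_mem_branch (M.att_mem w₁ w') hx
      exact Or.inr ⟨w', ⟨h, rfl⟩, rfl⟩
  calc (M.toSubgraph.neighborSet x).ncard
      ≤ (Subtype.val '' (M.tree w).neighborSet ⟨x, hx⟩).ncard +
        ((fun w' => M.att w' w) '' {w' ∈ H.neighborSet w | M.att w w' = x}).ncard :=
        (Set.ncard_le_ncard hsub).trans (Set.ncard_union_le _ _)
    _ ≤ _ := by
        gcongr
        · exact (Set.ncard_image_of_injective _ Subtype.val_injective).le
        · exact Set.ncard_image_le

lemma ncard_isIsolated_le [Finite W] :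
    {x | M.toSubgraph.coe.IsIsolated x}.ncard ≤ Nat.card W := by
  choose idx hidx using fun x : M.toSubgraph.verts => Set.mem_iUnion.mp x.2
  refine (Set.ncard_le_ncard_of_injOn idx (fun _ _ => Set.mem_univ _) ?_).trans
    (Set.ncard_univ W).le
  intro x hx y _ hxy
  by_contra hne
  have hreach := (M.isTree (idx x)).connected (⟨x, hidx x⟩ : M.branch (idx x)) ⟨y, hxy ▸ hidx y⟩
  obtain ⟨z, hz⟩ := hreach.nonempty_neighborSet_left fun h => hne (Subtype.ext (by simpa using h))
  exact hx ⟨z, M.mem_toSubgraph_verts z.2⟩ (Or.inl ⟨idx x, _, _, hz⟩)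

lemma ncard_neighborSet_toSubgraph_le_of_isMinimumMinorModel [Finite V] [Fintype W]
    (hM : IsMinimumMinorModel G H M.branch) {w : W} {x : V} (hx : x ∈ M.branch w) :
    (M.toSubgraph.neighborSet x).ncard ≤ (H.neighborSet w).ncard := by
  let attAt : W → M.branch w := fun w' => ⟨M.att w w', M.att_mem w w'⟩
  have hleaves : {u | u ≠ ⟨x, hx⟩ ∧ ((M.tree w).neighborSet u).ncard = 1} ⊆
      attAt '' H.neighborSet w := by
    rintro u ⟨-, hu⟩
    obtain ⟨w', hw', hforced⟩ := hM.exists_adj_forall_adj_eq u.2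
      ((M.isTree w).connected_induce_sdiff_singleton (M.tree_le w) hu)
    exact ⟨w', hw', Subtype.ext (hforced _ (M.att_mem w w') _ (M.att_mem w' w) (M.adj_att hw'))⟩
  have hfiber : {w' ∈ H.neighborSet w | M.att w w' = x} =
      {w' ∈ H.neighborSet w | attAt w' = ⟨x, hx⟩} := by
    simp [attAt, Subtype.ext_iff]
  calc (M.toSubgraph.neighborSet x).ncard
      ≤ ((M.tree w).neighborSet ⟨x, hx⟩).ncard + {w' ∈ H.neighborSet w | M.att w w' = x}.ncard :=
        M.ncard_neighborSet_toSubgraph_le hx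
    _ ≤ {u | u ≠ ⟨x, hx⟩ ∧ ((M.tree w).neighborSet u).ncard = 1}.ncard +
        {w' ∈ H.neighborSet w | attAt w' = ⟨x, hx⟩}.ncard := by
        rw [hfiber]
        exact add_le_add_left ((M.isTree w).ncard_neighborSet_le_ncard_leaves _) _
    _ ≤ (H.neighborSet w).ncard := by
        rw [add_comm]
        exact Set.ncard_sep_add_ncard_le_of_subset_image (Set.toFinite _) (fun h => h.1 rfl)
          hleaves

end TreeModel

/-- If `G` contains `H` as a minor, then some subgraph `G*` of `G` still contains `H`
as a minor, has maximum degree at most `Δ(H)`, and has at most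
`|V(H)| + vc(G*)·(Δ(H)+1)` vertices. -/
theorem stmt0 {V : Type u} {W : Type v} [Fintype V] [Fintype W]
    (G : SimpleGraph V) (H : SimpleGraph W) (h : HasMinor G H) :
    ∃ G' : G.Subgraph, HasMinor G'.coe H ∧ maxDeg G'.coe ≤ maxDeg H ∧
      G'.verts.ncard ≤ Fintype.card W + vcNum G'.coe * (maxDeg H + 1) := by
  obtain ⟨φ, hφ⟩ := h.exists_isMinimumMinorModel
  obtain ⟨M, rfl⟩ := hφ.1.exists_treeModel
  have hdeg : maxDeg M.toSubgraph.coe ≤ maxDeg H :=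
    Subgraph.maxDeg_coe_le _ fun x hx => by
      obtain ⟨w, hxw⟩ := Set.mem_iUnion.mp hx
      exact (M.ncard_neighborSet_toSubgraph_le_of_isMinimumMinorModel hφ hxw).trans
        (ncard_neighborSet_le_maxDeg H w)
  refine ⟨M.toSubgraph, M.hasMinor_toSubgraph, hdeg, ?_⟩
  calc M.toSubgraph.verts.ncard = Nat.card M.toSubgraph.verts := (Nat.card_coe_set_eq _).symm
    _ ≤ {x | M.toSubgraph.coe.IsIsolated x}.ncard +
        vcNum M.toSubgraph.coe * (maxDeg M.toSubgraph.coe + 1) :=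
      card_le_ncard_isIsolated_add_vcNum_mul _
    _ ≤ Fintype.card W + vcNum M.toSubgraph.coe * (maxDeg H + 1) := by
      rw [← Nat.card_eq_fintype_card]
      gcongr
      exact M.ncard_isIsolated_le
end

section
/- The property of containing an odd cycle (a cycle of odd length) is characterized by 2 adjacencies. -/
open SimpleGraph

universe u

/-- The graph property `P` (a class of graphs) is characterized by `c` adjacencies:
for every (finite) graph `G` satisfying `P` and every vertex `x` of `G`, there is a set
`D ⊆ V(G) \ {x}` with `|D| ≤ c` such that every graph `G'` on the same vertex set whose
edge set differs from that of `G` only on pairs `{x, u}` with `u ∉ D ∪ {x}`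
also satisfies `P`. -/
def CharByAdjAll (P : ∀ {α : Type u}, SimpleGraph α → Prop) (c : ℕ) : Prop :=
  ∀ (α : Type u) [Fintype α], ∀ G : SimpleGraph α, P G → ∀ x : α,
    ∃ D : Set α, x ∉ D ∧ D.ncard ≤ c ∧
      ∀ G' : SimpleGraph α,
        (∀ ⦃a b : α⦄, a ≠ x → b ≠ x → (G'.Adj a b ↔ G.Adj a b)) →
        (∀ u ∈ D, (G'.Adj x u ↔ G.Adj x u)) →
        P G'

/-- `G` contains a simple cycle of odd length. -/
def HasOddCycle {V : Type*} (G : SimpleGraph V) : Prop :=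
  ∃ (x : V) (p : G.Walk x x), p.IsCycle ∧ Odd p.length

/-! An odd cycle `C` of `G` survives any change of the edges at `x` that keeps the edges from
`x` to its neighbours on `C`, and `x` has at most two of those. -/

namespace SimpleGraph.Walk

variable {V : Type*} {G G' : SimpleGraph V} {u v : V}

lemma IsCycle.ncard_neighborSet_toSubgraph_le_two {p : G.Walk u u} (hp : p.IsCycle) (x : V) :
    (p.toSubgraph.neighborSet x).ncard ≤ 2 := by
  by_cases hx : x ∈ p.support
  · exact (hp.ncard_neighborSet_toSubgraph_eq_two hx).le
  · have hempty : p.toSubgraph.neighborSet x = ∅ :=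
      Set.eq_empty_of_forall_notMem fun _ hadj => hx (mem_support_of_adj_toSubgraph hadj)
    simp [hempty]

lemma edges_subset_edgeSet_of_adj_imp (p : G.Walk u v) (x : V)
    (hoff : ∀ ⦃a b : V⦄, a ≠ x → b ≠ x → G.Adj a b → G'.Adj a b)
    (hat : ∀ w ∈ p.toSubgraph.neighborSet x, G.Adj x w → G'.Adj x w) :
    ∀ e ∈ p.edges, e ∈ G'.edgeSet := by
  refine Sym2.ind fun a b he => ?_
  have hadj : G.Adj a b := p.adj_of_mem_edges he
  have hsub : p.toSubgraph.Adj a b := adj_toSubgraph_iff_mem_edges.mpr he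
  rw [SimpleGraph.mem_edgeSet]
  by_cases ha : a = x
  · subst ha
    exact hat b hsub hadj
  by_cases hb : b = x
  · subst hb
    exact (hat a hsub.symm hadj.symm).symm
  exact hoff ha hb hadj

end SimpleGraph.Walk

/-- The property of containing an odd cycle is characterized by 2 adjacencies. -/
theorem stmt4 :
    CharByAdjAll (fun {α} (G : SimpleGraph α) => HasOddCycle G) 2 := by
  intro α _ G hG x
  obtain ⟨v, p, hcycle, hodd⟩ := hG
  refine ⟨p.toSubgraph.neighborSet x, fun hx => hx.ne rfl,
    hcycle.ncard_neighborSet_toSubgraph_le_two x, fun G' hoff hat => ?_⟩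
  have hedges := p.edges_subset_edgeSet_of_adj_imp x (fun _ _ ha hb => (hoff ha hb).mpr)
    (fun w hw => (hat w hw).mpr)
  exact ⟨v, p.transfer G' hedges, hcycle.transfer hedges, by rwa [Walk.length_transfer]⟩
end

section
/- For every fixed finite nonempty set F of graphs, the property of containing some member of F as a minor is characterized by max_{H ∈ F} Δ(H) adjacencies. -/
open SimpleGraph

universe u v

/-! If `x` lies in the branch set `φ w₀` of a minor model of `H`, choose for every neighbour `w`
of `w₀` an edge `ab` from `φ w₀` to `φ w` and a path from `x` to `a` inside `φ w₀`. The first edge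
of that path (the edge `xb` itself when `a = x`) is the one adjacency of `x` to remember. As long
as these at most `deg w₀` edges at `x` survive, the union of the paths stays connected and still
reaches every neighbouring branch set, so it can replace `φ w₀`; every other branch set and every
other edge of the model avoids `x`, so changing the edges at `x` does not affect them. -/

namespace SimpleGraph

variable {α : Type*} {W : Type*} {G G' : SimpleGraph α} {H : SimpleGraph W} {x : α}

def AdjAgreeOff (G G' : SimpleGraph α) (x : α) : Prop :=
  ∀ ⦃a b : α⦄, a ≠ x → b ≠ x → (G'.Adj a b ↔ G.Adj a b)

lemma connected_induce_singleton (x : α) : (G.induce {x}).Connected :=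
  (connected_iff_exists_forall_reachable _).2 ⟨⟨x, rfl⟩, fun ⟨_, hy⟩ => by subst hy; rfl⟩

lemma Connected.exists_isPath_support_subset {C : Set α} (hC : (G.induce C).Connected)
    {a b : α} (ha : a ∈ C) (hb : b ∈ C) :
    ∃ p : G.Walk a b, p.IsPath ∧ ∀ v ∈ p.support, v ∈ C := by
  classical
  obtain ⟨q⟩ := hC.preconnected ⟨a, ha⟩ ⟨b, hb⟩
  let p := q.toPath.1.map (Embedding.induce (G := G) C).toHom
  have hpC : ∀ v ∈ p.support, v ∈ C := by
    simp only [p, Walk.support_map, List.mem_map]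
    rintro _ ⟨v, -, rfl⟩
    exact v.2
  exact ⟨p, q.toPath.2.map (Embedding.induce (G := G) C).injective, hpC⟩

namespace AdjAgreeOff

lemma adj (h : AdjAgreeOff G G' x) {a b : α} (ha : a ≠ x) (hb : b ≠ x) (hab : G.Adj a b) :
    G'.Adj a b :=
  (h ha hb).2 hab

lemma induce_eq (h : AdjAgreeOff G G' x) {s : Set α} (hs : x ∉ s) :
    G'.induce s = G.induce s := by
  ext ⟨a, ha⟩ ⟨b, hb⟩
  exact h (ne_of_mem_of_not_mem ha hs) (ne_of_mem_of_not_mem hb hs)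

lemma exists_adj {s t : Set α} (h : AdjAgreeOff G G' x) (hs : x ∉ s) (ht : x ∉ t)
    (hst : ∃ a ∈ s, ∃ b ∈ t, G.Adj a b) : ∃ a ∈ s, ∃ b ∈ t, G'.Adj a b := by
  obtain ⟨a, ha, b, hb, hab⟩ := hst
  exact ⟨a, ha, b, hb, h.adj (ne_of_mem_of_not_mem ha hs) (ne_of_mem_of_not_mem hb ht) hab⟩

lemma connected_induce_support_cons (h : AdjAgreeOff G G' x) {d a : α} (hxd : G.Adj x d)
    (q : G.Walk d a) (hq : x ∉ q.support) (h'xd : G'.Adj x d) :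
    (G'.induce {v | v ∈ (q.cons hxd).support}).Connected := by
  have hsupp : {v | v ∈ (q.cons hxd).support} = {x} ∪ {v | v ∈ q.support} := by
    ext; simp
  have hq' : (G'.induce {v | v ∈ q.support}).Connected := by
    rw [h.induce_eq hq]
    exact q.connected_induce_support
  rw [hsupp]
  exact connected_induce_union (connected_induce_singleton x).preconnected hq'.preconnected
    rfl q.start_mem_support h'xd

end AdjAgreeOff

/-- `P` is the vertex set of a path from `x` to `a` inside `C` and `d` its second vertex
(`P = {x}` and `d = b` if `a = x`). -/
lemma exists_subset_connected_adj_of_adjAgreeOff {C : Set α} (hC : (G.induce C).Connected)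
    (hx : x ∈ C) {a b : α} (ha : a ∈ C) (hbx : b ≠ x) (hab : G.Adj a b) :
    ∃ P ⊆ C, x ∈ P ∧ ∃ d, G.Adj x d ∧ ∀ G' : SimpleGraph α, AdjAgreeOff G G' x →
      G'.Adj x d → (G'.induce P).Connected ∧ ∃ p ∈ P, G'.Adj p b := by
  by_cases hax : a = x
  · subst hax
    exact ⟨{a}, Set.singleton_subset_iff.2 ha, rfl, b, hab,
      fun _ _ h'ab => ⟨connected_induce_singleton a, a, rfl, h'ab⟩⟩
  obtain ⟨p, hp, hpC⟩ := hC.exists_isPath_support_subset hx ha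
  cases p with
  | nil => exact absurd rfl hax
  | cons hxd q =>
    have hxq : x ∉ q.support := ((Walk.cons_isPath_iff hxd q).1 hp).2
    exact ⟨_, hpC, Walk.start_mem_support _, _, hxd, fun G' hG' h'xd =>
      ⟨hG'.connected_induce_support_cons hxd q hxq h'xd, a, Walk.end_mem_support _,
        hG'.adj hax hbx hab⟩⟩

lemma ncard_neighborSet_le_maxDeg [Finite W] (H : SimpleGraph W) (w : W) :
    (H.neighborSet w).ncard ≤ maxDeg H :=
  le_ciSup (f := fun w => (H.neighborSet w).ncard) (Set.finite_range _).bddAbove w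

def IsMinorModel (G : SimpleGraph α) (H : SimpleGraph W) (φ : W → Set α) : Prop :=
  (∀ w, (φ w).Nonempty) ∧
    (Pairwise fun w w' => Disjoint (φ w) (φ w')) ∧
    (∀ w, (G.induce (φ w)).Connected) ∧
    ∀ ⦃w w'⦄, H.Adj w w' → ∃ a ∈ φ w, ∃ b ∈ φ w', G.Adj a b

namespace IsMinorModel

variable {φ : W → Set α}

lemma of_adjAgreeOff (hφ : IsMinorModel G H φ) (hG' : AdjAgreeOff G G' x)
    (hx : ∀ w, x ∉ φ w) : IsMinorModel G' H φ := by
  obtain ⟨hne, hdisj, hconn, hedge⟩ := hφ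
  refine ⟨hne, hdisj, fun w => ?_, fun w w' hww' => hG'.exists_adj (hx w) (hx w') (hedge hww')⟩
  rw [hG'.induce_eq (hx w)]
  exact hconn w

lemma notMem_of_ne (hφ : IsMinorModel G H φ) {w₀ w : W} (hx : x ∈ φ w₀) (hw : w ≠ w₀) :
    x ∉ φ w :=
  fun hxw => Set.disjoint_left.1 (hφ.2.1 hw) hxw hx

lemma update [DecidableEq W] (hφ : IsMinorModel G H φ) (hG' : AdjAgreeOff G G' x) {w₀ : W}
    (hx : x ∈ φ w₀) {S : Set α} (hSφ : S ⊆ φ w₀) (hxS : x ∈ S) (hS : (G'.induce S).Connected)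
    (hSadj : ∀ w, H.Adj w₀ w → ∃ a ∈ S, ∃ b ∈ φ w, G'.Adj a b) :
    IsMinorModel G' H (Function.update φ w₀ S) := by
  have ⟨hne, hdisj, hconn, hedge⟩ := hφ
  have hsub : ∀ w, Function.update φ w₀ S w ⊆ φ w := by
    intro w
    rcases eq_or_ne w w₀ with rfl | hw
    · simpa using hSφ
    · simp [hw]
  refine ⟨fun w => ?_, fun w w' hww' => (hdisj hww').mono (hsub w) (hsub w'), fun w => ?_,
    fun w w' hww' => ?_⟩
  · rcases eq_or_ne w w₀ with rfl | hw
    · simpa using ⟨x, hxS⟩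
    · simpa [hw] using hne w
  · rcases eq_or_ne w w₀ with rfl | hw
    · rwa [Function.update_self]
    · rw [Function.update_of_ne hw, hG'.induce_eq (hφ.notMem_of_ne hx hw)]
      exact hconn w
  · rcases eq_or_ne w w₀ with rfl | hw
    · simpa [hww'.ne'] using hSadj w' hww'
    rcases eq_or_ne w' w₀ with rfl | hw'
    · obtain ⟨a, ha, b, hb, hab⟩ := hSadj w hww'.symm
      simpa [hw] using ⟨b, hb, a, ha, hab.symm⟩
    · simpa [hw, hw'] using hG'.exists_adj (hφ.notMem_of_ne hx hw) (hφ.notMem_of_ne hx hw')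
        (hedge hww')

lemma exists_forall_hasMinor_of_adjAgreeOff [Finite W] (hφ : IsMinorModel G H φ) {w₀ : W} (hx : x ∈ φ w₀) :
    ∃ D : Set α, x ∉ D ∧ D.ncard ≤ maxDeg H ∧ ∀ G' : SimpleGraph α, AdjAgreeOff G G' x →
      (∀ u ∈ D, (G'.Adj x u ↔ G.Adj x u)) → HasMinor G' H := by
  classical
  have : Nonempty α := ⟨x⟩
  have ⟨_, hdisj, hconn, hedge⟩ := hφ
  have hpiece : ∀ w, H.Adj w₀ w → ∃ P ⊆ φ w₀, x ∈ P ∧ ∃ d, G.Adj x d ∧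
      ∀ G' : SimpleGraph α, AdjAgreeOff G G' x → G'.Adj x d →
        (G'.induce P).Connected ∧ ∃ p ∈ P, ∃ r ∈ φ w, G'.Adj p r := by
    intro w hw
    obtain ⟨a, ha, b, hb, hab⟩ := hedge hw
    have hbx : b ≠ x := ne_of_mem_of_not_mem hb (hφ.notMem_of_ne hx hw.ne')
    obtain ⟨P, hPφ, hxP, d, hxd, hP⟩ :=
      exists_subset_connected_adj_of_adjAgreeOff (hconn w₀) hx ha hbx hab
    exact ⟨P, hPφ, hxP, d, hxd, fun G' hG' h'xd =>
      (hP G' hG' h'xd).imp_right fun ⟨p, hp, hpb⟩ => ⟨p, hp, b, hb, hpb⟩⟩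
  choose! P hPφ hxP d hxd hP using hpiece
  refine ⟨d '' H.neighborSet w₀, fun ⟨w, hw, hdw⟩ => (hxd w hw).ne hdw.symm, ?_,
    fun G' hG' hD => ?_⟩
  · exact (Set.ncard_image_le (Set.toFinite _)).trans (ncard_neighborSet_le_maxDeg H w₀)
  have h'xd : ∀ w, H.Adj w₀ w → G'.Adj x (d w) :=
    fun w hw => (hD _ ⟨w, hw, rfl⟩).2 (hxd w hw)
  have hmem : ∀ s ∈ insert {x} (P '' H.neighborSet w₀), x ∈ s := by
    rintro s (rfl | ⟨w, hw, rfl⟩)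
    exacts [rfl, hxP w hw]
  refine ⟨_, hφ.update hG' hx (S := ⋃₀ insert {x} (P '' H.neighborSet w₀)) ?_ ?_ ?_ ?_⟩
  · rintro v ⟨s, (rfl | ⟨w, hw, rfl⟩), hv⟩
    exacts [hv ▸ hx, hPφ w hw hv]
  · exact ⟨{x}, Set.mem_insert _ _, rfl⟩
  · refine induce_sUnion_connected_of_pairwise_not_disjoint ⟨{x}, Set.mem_insert _ _⟩
      (fun hs ht => ⟨x, hmem _ hs, hmem _ ht⟩) ?_
    rintro s (rfl | ⟨w, hw, rfl⟩)
    exacts [connected_induce_singleton x, (hP w hw G' hG' (h'xd w hw)).1]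
  · intro w hw
    obtain ⟨p, hp, r, hr, hpr⟩ := (hP w hw G' hG' (h'xd w hw)).2
    exact ⟨p, ⟨P w, Set.mem_insert_of_mem _ ⟨w, hw, rfl⟩, hp⟩, r, hr, hpr⟩

end IsMinorModel

theorem charByAdjAll_hasMinor {W : Type v} [Finite W] (H : SimpleGraph W) :
    CharByAdjAll (fun {α : Type u} (G : SimpleGraph α) => HasMinor G H) (maxDeg H) := by
  rintro α _ G ⟨φ, hφ⟩ x
  by_cases hx : ∃ w₀, x ∈ φ w₀
  · obtain ⟨w₀, hxw₀⟩ := hx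
    exact IsMinorModel.exists_forall_hasMinor_of_adjAgreeOff hφ hxw₀
  · push Not at hx
    exact ⟨∅, Set.notMem_empty x, by simp, fun G' hG' _ =>
      ⟨φ, IsMinorModel.of_adjAgreeOff hφ hG' hx⟩⟩

end SimpleGraph

namespace CharByAdjAll

variable {P : ∀ {α : Type u}, SimpleGraph α → Prop} {c : ℕ}

lemma mono (h : CharByAdjAll P c) {c' : ℕ} (hcc' : c ≤ c') : CharByAdjAll P c' := by
  intro α _ G hG x
  obtain ⟨D, hxD, hD, hP⟩ := h α G hG x
  exact ⟨D, hxD, hD.trans hcc', hP⟩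

end CharByAdjAll

lemma charByAdjAll_exists {ι : Sort*} {P : ι → ∀ {α : Type u}, SimpleGraph α → Prop} {c : ℕ}
    (h : ∀ i, CharByAdjAll (P i) c) : CharByAdjAll (fun G => ∃ i, P i G) c := by
  rintro α _ G ⟨i, hi⟩ x
  obtain ⟨D, hxD, hD, hP⟩ := h i α G hi x
  exact ⟨D, hxD, hD, fun G' h₁ h₂ => ⟨i, hP G' h₁ h₂⟩⟩

theorem stmt5_general {k : ℕ} (W : Fin k → Type v) [∀ i, Fintype (W i)]
    (H : ∀ i, SimpleGraph (W i)) :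
    CharByAdjAll (fun {α} (G : SimpleGraph α) => ∃ i, HasMinor G (H i))
      (Finset.univ.sup fun i => maxDeg (H i)) :=
  charByAdjAll_exists (P := fun i {_} G => HasMinor G (H i)) fun i =>
    (charByAdjAll_hasMinor (H i)).mono
      (Finset.le_sup (f := fun i => maxDeg (H i)) (Finset.mem_univ i))

/-- For every fixed finite nonempty family `F = {H i}` of (finite) graphs, the property of
containing some member of `F` as a minor is characterized by `max_{H ∈ F} Δ(H)`
adjacencies. -/
theorem stmt5 {k : ℕ} (hk : 0 < k) (W : Fin k → Type v) [∀ i, Fintype (W i)]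
    (H : ∀ i, SimpleGraph (W i)) :
    CharByAdjAll (fun {α} (G : SimpleGraph α) => ∃ i, HasMinor G (H i))
      (Finset.univ.sup fun i => maxDeg (H i)) :=
  stmt5_general W H
end

section
/- For every fixed graph H, the property of having a perfect H-packing is characterized by Δ(H) adjacencies. -/
open SimpleGraph

universe u v

/-- `G` has a perfect `H`-packing: its vertex set can be partitioned into parts, each of
which is the vertex set of a subgraph of `G` isomorphic to `H`. -/
def HasPerfectPacking {V : Type u} {W : Type v} (G : SimpleGraph V) (H : SimpleGraph W) :
    Prop :=
  ∃ P : Set (Set V),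
    (∀ S ∈ P, ∀ T ∈ P, S ≠ T → Disjoint S T) ∧
    ⋃₀ P = Set.univ ∧
    ∀ S ∈ P, ∃ f : W → V, Function.Injective f ∧ Set.range f = S ∧
      ∀ ⦃a b⦄, H.Adj a b → G.Adj (f a) (f b)

/-! Fix a perfect packing and the copy `f : H → G` that covers `x = f w`. Take `D` to be the image
of the `H`-neighbours of `w`, which has at most `Δ(H)` elements. Every edge of a copy in the
packing either avoids `x` or is an edge `f w — f u` with `f u ∈ D`, so changing adjacencies at
`x` outside `D` keeps the same packing perfect. -/

theorem le_maxDeg {V : Type*} [Finite V] (G : SimpleGraph V) (v : V) :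
    (G.neighborSet v).ncard ≤ maxDeg G :=
  le_ciSup (f := fun v => (G.neighborSet v).ncard) (Set.finite_range _).bddAbove v

section Modification

variable {α : Type*} {G G' : SimpleGraph α} {x : α} {D : Set α}

theorem adj_of_agree_off_vertex
    (hoff : ∀ ⦃a b : α⦄, a ≠ x → b ≠ x → (G'.Adj a b ↔ G.Adj a b))
    (hD : ∀ u ∈ D, (G'.Adj x u ↔ G.Adj x u)) {a b : α} (hab : G.Adj a b)
    (ha : a = x → b ∈ D) (hb : b = x → a ∈ D) : G'.Adj a b := by
  by_cases hax : a = x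
  · subst hax
    exact (hD b (ha rfl)).mpr hab
  by_cases hbx : b = x
  · subst hbx
    exact ((hD a (hb rfl)).mpr hab.symm).symm
  exact (hoff hax hbx).mpr hab

theorem map_adj_of_agree_off_vertex {W : Type*} {H : SimpleGraph W} {f : W → α}
    (hfG : ∀ ⦃a b⦄, H.Adj a b → G.Adj (f a) (f b))
    (hoff : ∀ ⦃a b : α⦄, a ≠ x → b ≠ x → (G'.Adj a b ↔ G.Adj a b))
    (hD : ∀ u ∈ D, (G'.Adj x u ↔ G.Adj x u))
    (hnbr : ∀ w, f w = x → f '' H.neighborSet w ⊆ D) :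
    ∀ ⦃a b⦄, H.Adj a b → G'.Adj (f a) (f b) := by
  intro a b hab
  exact adj_of_agree_off_vertex hoff hD (hfG hab) (fun ha => hnbr a ha ⟨b, hab, rfl⟩)
    (fun hb => hnbr b hb ⟨a, hab.symm, rfl⟩)

end Modification

theorem stmt6_general {W : Type v} (H : SimpleGraph W) :
    CharByAdjAll (fun {α} (G : SimpleGraph α) => HasPerfectPacking G H) (maxDeg H) := by
  intro α _ G ⟨P, hdisj, hcov, hemb⟩ x
  obtain ⟨S, hS, hxS⟩ : x ∈ ⋃₀ P := hcov ▸ trivial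
  obtain ⟨f, hf, rfl, hfG⟩ := hemb S hS
  obtain ⟨w, rfl⟩ := hxS
  have : Finite W := Finite.of_injective f hf
  refine ⟨f '' H.neighborSet w, fun hw => ?_, ?_, fun G' hoff hD => ⟨P, hdisj, hcov, ?_⟩⟩
  · exact H.loopless.irrefl w (hf.mem_set_image.mp hw)
  · exact (Set.ncard_image_of_injective _ hf).trans_le (le_maxDeg H w)
  intro T hT
  by_cases hTS : T = Set.range f
  · subst hTS
    refine ⟨f, hf, rfl, map_adj_of_agree_off_vertex hfG hoff hD ?_⟩
    rintro w' hw'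
    rw [hf hw']
  · obtain ⟨g, hg, rfl, hgG⟩ := hemb T hT
    refine ⟨g, hg, rfl, map_adj_of_agree_off_vertex hgG hoff hD ?_⟩
    rintro w' hw'
    exact absurd (hdisj _ hT _ hS hTS) (Set.not_disjoint_iff.mpr ⟨_, ⟨w', hw'⟩, ⟨w, rfl⟩⟩)

/-- For every fixed graph `H`, the property of having a perfect `H`-packing is
characterized by `Δ(H)` adjacencies. -/
theorem stmt6 {W : Type v} [Fintype W] (H : SimpleGraph W) :
    CharByAdjAll (fun {α} (G : SimpleGraph α) => HasPerfectPacking G H) (maxDeg H) :=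
  stmt6_general H
end

section
/- For every fixed integer ℓ ≥ 4, the property of having a chordless cycle of length at least ℓ (i.e., an induced cycle on at least ℓ vertices) is characterized by ℓ − 1 adjacencies. -/
open SimpleGraph

universe u

/-- `G` has a chordless (induced) cycle on at least `l` vertices: a simple cycle of
length at least `l` such that the only edges of `G` between vertices of the cycle are
the edges of the cycle itself. -/
def HasLongChordlessCycle {V : Type*} (G : SimpleGraph V) (l : ℕ) : Prop :=
  ∃ (x : V) (p : G.Walk x x), p.IsCycle ∧ l ≤ p.length ∧
    ∀ ⦃a b : V⦄, a ∈ p.support → b ∈ p.support → G.Adj a b → s(a, b) ∈ p.edges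

/-!
Let `C` be a chordless cycle of length `k ≥ l` in `G`. If `x` is not on `C`, take `D = ∅`:
changing adjacencies at `x` leaves `C` intact. Otherwise write `C = x v₁ … v_{k-1} x` and take
`D = {v₁, …, v_{l-2}, v_{k-1}}`. In any `G'` that agrees with `G` away from `x` and on `D`,
the vertex `x` is still adjacent to `v₁` and `v_{k-1}` and to none of `v₂, …, v_{l-2}`; so if
`j ≥ l - 1` is the first index with `x ~ v_j` in `G'`, then `x v₁ … v_j x` is a chordless cycle
of `G'` of length `j + 1 ≥ l`.
-/

namespace SimpleGraph.Walk

variable {V : Type*} {G : SimpleGraph V}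

@[simp]
lemma getVert_transfer {H : SimpleGraph V} {u v : V} (p : G.Walk u v) (hp) (n : ℕ) :
    (p.transfer H hp).getVert n = p.getVert n := by
  induction p generalizing n with
  | nil => simp
  | cons h p ih => cases n with
    | zero => rfl
    | succ n => exact ih _ n

lemma IsChordless.rotate [DecidableEq V] {u v : V} {c : G.Walk v v} (hc : c.IsChordless)
    (h : u ∈ c.support) : (c.rotate u h).IsChordless := by
  rw [isChordless_iff_forall_mem_edges]
  intro a b ha hb hab
  rw [mem_support_rotate_iff] at ha hb
  exact (rotate_edges c u h).mem_iff.mpr (hc.mem_edges ha hb hab)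

lemma IsCycle.getVert_ne_start {x : V} {q : G.Walk x x} (hq : q.IsCycle) {i : ℕ}
    (h1 : 1 ≤ i) (hi : i < q.length) : q.getVert i ≠ x := by
  rw [Ne, hq.getVert_endpoint_iff hi.le]
  omega

lemma IsCycle.eq_add_one_or_of_adj_getVert {x : V} {q : G.Walk x x} (hq : q.IsCycle)
    (hc : q.IsChordless) {i i' : ℕ} (hii' : i < i') (hi' : i' < q.length)
    (hadj : G.Adj (q.getVert i) (q.getVert i')) : i' = i + 1 ∨ i = 0 ∧ i' = q.length - 1 := by
  obtain ⟨m, hm, hedge⟩ := (mk_mem_edges_iff_exists q).mp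
    (hc.mem_edges (q.getVert_mem_support i) (q.getVert_mem_support i') hadj)
  have hinj : ∀ {n n'}, n < q.length → n' < q.length → q.getVert n = q.getVert n' → n = n' :=
    fun hn hn' h => hq.getVert_injOn' (by simp only [Set.mem_ofPred_eq]; omega)
      (by simp only [Set.mem_ofPred_eq]; omega) h
  have hsucc : ∀ {n}, n < q.length → q.getVert (m + 1) = q.getVert n →
      n = m + 1 ∨ m + 1 = q.length ∧ n = 0 := by
    intro n hn h
    rcases Nat.lt_or_ge (m + 1) q.length with hm1 | hm1
    · exact Or.inl (hinj hn hm1 h.symm)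
    · rw [show m + 1 = q.length by omega, q.getVert_length, eq_comm,
        hq.getVert_endpoint_iff hn.le] at h
      omega
  rcases Sym2.eq_iff.mp hedge with ⟨hmi, hmi'⟩ | ⟨hmi', hmi⟩
  · have := hinj hm (by omega) hmi
    have := hsucc hi' hmi'
    omega
  · have := hinj hm hi' hmi'
    have := hsucc (by omega) hmi
    omega

lemma IsCycle.hasLongChordlessCycle_of_adj_iff {G' : SimpleGraph V} {y : V} {p : G.Walk y y}
    (hp : p.IsCycle) (hc : p.IsChordless) {l : ℕ} (hl : l ≤ p.length)
    (hG' : ∀ ⦃a b : V⦄, a ∈ p.support → b ∈ p.support → (G'.Adj a b ↔ G.Adj a b)) :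
    HasLongChordlessCycle G' l := by
  have hedges : ∀ e ∈ p.edges, e ∈ G'.edgeSet := by
    intro e he
    induction e using Sym2.ind with
    | h a b => exact (hG' (p.fst_mem_support_of_mem_edges he)
        (p.snd_mem_support_of_mem_edges he)).mpr (p.edges_subset_edgeSet he)
  refine ⟨y, p.transfer G' hedges, hp.transfer hedges, by simpa using hl, ?_⟩
  intro a b ha hb hab
  rw [support_transfer] at ha hb
  rw [edges_transfer]
  exact hc.mem_edges ha hb ((hG' ha hb).mp hab)

lemma IsPath.hasLongChordlessCycle {u v : V} {p : G.Walk u v} (hp : p.IsPath)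
    (hvu : G.Adj v u) (hlen : 2 ≤ p.length)
    (hchord : ∀ i i', i < i' → i' ≤ p.length → G.Adj (p.getVert i) (p.getVert i') →
      i' = i + 1 ∨ i = 0 ∧ i' = p.length)
    {l : ℕ} (hl : l ≤ p.length + 1) : HasLongChordlessCycle G l := by
  have hcyc : (cons hvu.symm p.reverse).IsCycle := by
    refine (cons_isCycle_iff _ _).mpr ⟨hp.reverse, fun h => ?_⟩
    rw [edges_reverse, List.mem_reverse] at h
    have := hp.getVert_injOn (by simp only [Set.mem_ofPred_eq]; omega) (by simp)
      ((hp.eq_snd_of_mem_edges h).symm.trans p.getVert_length.symm)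
    omega
  refine ⟨u, _, hcyc, by simpa using hl, ?_⟩
  have hedge : ∀ i i', i < i' → i' ≤ p.length → G.Adj (p.getVert i) (p.getVert i') →
      s(p.getVert i, p.getVert i') ∈ (cons hvu.symm p.reverse).edges := by
    intro i i' hii' hi' hadj
    rw [edges_cons, edges_reverse, List.mem_cons, List.mem_reverse]
    rcases hchord i i' hii' hi' hadj with rfl | ⟨rfl, rfl⟩
    · exact Or.inr ((mk_mem_edges_iff_exists p).mpr ⟨i, by omega, rfl⟩)
    · simp
  have hsupp : ∀ {w}, w ∈ (cons hvu.symm p.reverse).support →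
      ∃ n, p.getVert n = w ∧ n ≤ p.length := by
    intro w hw
    rw [support_cons, support_reverse, List.mem_cons, List.mem_reverse] at hw
    exact mem_support_iff_exists_getVert.mp (hw.elim (· ▸ p.start_mem_support) id)
  intro a b ha hb hab
  obtain ⟨i, rfl, hi⟩ := hsupp ha
  obtain ⟨i', rfl, hi'⟩ := hsupp hb
  rcases lt_trichotomy i i' with h | rfl | h
  · exact hedge i i' h hi' hab
  · exact absurd rfl hab.ne
  · exact Sym2.eq_swap ▸ hedge i' i h hi hab.symm

/-- The prefix `x v₁ … v_j` of `q`, closed by the edge `v_j x` of `G'`, is a chordless cycle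
of `G'`. -/
lemma IsCycle.hasLongChordlessCycle_of_shortcut {G' : SimpleGraph V} {x : V} {q : G.Walk x x}
    (hq : q.IsCycle) (hc : q.IsChordless)
    (hoff : ∀ ⦃a b : V⦄, a ≠ x → b ≠ x → (G'.Adj a b ↔ G.Adj a b)) (hsnd : G'.Adj x q.snd)
    {j : ℕ} (hj : 2 ≤ j) (hjq : j < q.length) (hxj : G'.Adj x (q.getVert j))
    (hgap : ∀ i, 2 ≤ i → i < j → ¬ G'.Adj x (q.getVert i)) {l : ℕ} (hl : l ≤ j + 1) :
    HasLongChordlessCycle G' l := by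
  have hedges : ∀ e ∈ (q.take j).edges, e ∈ G'.edgeSet := by
    intro e he
    induction e using Sym2.ind with
    | h a b =>
      obtain ⟨m, hm, hme⟩ := (mk_mem_edges_iff_exists _).mp he
      rw [← hme]
      simp only [take_length, take_getVert] at hm ⊢
      rw [min_eq_right (by omega), min_eq_right (by omega)]
      rcases Nat.eq_zero_or_pos m with rfl | hm0
      · simpa using hsnd
      · exact (hoff (hq.getVert_ne_start hm0 (by omega))
          (hq.getVert_ne_start (by omega) (by omega))).mpr (q.adj_getVert_succ (by omega))
  have hlen : ((q.take j).transfer G' hedges).length = j := by simp; omega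
  refine ((hq.isPath_take hjq).transfer hedges).hasLongChordlessCycle ?_ (by omega) ?_ (by omega)
  · simpa using hxj.symm
  intro i i' hii' hi' hadj
  rw [hlen] at hi' ⊢
  simp only [getVert_transfer, take_getVert, min_eq_right hi',
    min_eq_right (hii'.le.trans hi')] at hadj
  rcases Nat.eq_zero_or_pos i with rfl | hi
  · by_contra h
    exact hgap i' (by omega) (by omega) (by simpa using hadj)
  · have := hq.eq_add_one_or_of_adj_getVert hc hii' (by omega) <|
      (hoff (hq.getVert_ne_start hi (by omega)) (hq.getVert_ne_start (by omega) (by omega))).mp hadj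
    omega

lemma IsCycle.hasLongChordlessCycle_of_adj_iff_off_start {G' : SimpleGraph V} {x : V}
    {q : G.Walk x x} (hq : q.IsCycle) (hc : q.IsChordless) {l : ℕ} (hl : 3 ≤ l)
    (hlq : l ≤ q.length) (hoff : ∀ ⦃a b : V⦄, a ≠ x → b ≠ x → (G'.Adj a b ↔ G.Adj a b))
    (hD : ∀ u ∈ insert q.penultimate (q.getVert '' Set.Icc 1 (l - 2)),
      (G'.Adj x u ↔ G.Adj x u)) :
    HasLongChordlessCycle G' l := by
  classical
  have hfront : ∀ i, 1 ≤ i → i ≤ l - 2 → (G'.Adj x (q.getVert i) ↔ G.Adj x (q.getVert i)) :=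
    fun i h1 h2 => hD _ (Set.mem_insert_of_mem _ ⟨i, ⟨h1, h2⟩, rfl⟩)
  have hex : ∃ j, l - 1 ≤ j ∧ j < q.length ∧ G'.Adj x (q.getVert j) :=
    ⟨q.length - 1, by omega, by omega, (hD _ (Set.mem_insert _ _)).mpr
      (q.adj_penultimate hq.not_nil).symm⟩
  obtain ⟨hjl, hjq, hxj⟩ := Nat.find_spec hex
  refine hq.hasLongChordlessCycle_of_shortcut hc hoff
    ((hfront 1 le_rfl (by omega)).mpr (q.adj_snd hq.not_nil)) (by omega) hjq hxj ?_ (by omega)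
  intro i h2 hij hadj
  by_cases hil : i ≤ l - 2
  · have := hq.eq_add_one_or_of_adj_getVert hc (i := 0) (i' := i) (by omega) (by omega)
      (by simpa using (hfront i (by omega) hil).mp hadj)
    omega
  · exact Nat.find_min hex hij ⟨by omega, by omega, hadj⟩

end SimpleGraph.Walk

/-- For every fixed `l ≥ 4`, the property of having a chordless cycle of length at
least `l` is characterized by `l - 1` adjacencies. -/
theorem stmt7 (l : ℕ) (hl : 4 ≤ l) :
    CharByAdjAll (fun {α} (G : SimpleGraph α) => HasLongChordlessCycle G l) (l - 1) := by
  classical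
  intro α _ G ⟨y, p, hp, hlp, hc⟩ x
  rw [← Walk.isChordless_iff_forall_mem_edges] at hc
  by_cases hx : x ∈ p.support
  · set q := p.rotate x hx
    have hq : q.IsCycle := hp.rotate hx
    have hlq : l ≤ q.length := by simpa [q] using hlp
    refine ⟨insert q.penultimate (q.getVert '' Set.Icc 1 (l - 2)), ?_, ?_, fun G' hoff hD =>
      hq.hasLongChordlessCycle_of_adj_iff_off_start (hc.rotate hx) (by omega) hlq hoff hD⟩
    · rintro (h | ⟨i, hi, h⟩)
      · exact hq.getVert_ne_start (by omega) (by omega) h.symm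
      · exact hq.getVert_ne_start hi.1 (by grind) h
    · calc _ ≤ (q.getVert '' Set.Icc 1 (l - 2)).ncard + 1 := Set.ncard_insert_le _ _
        _ ≤ (Set.Icc 1 (l - 2)).ncard + 1 := by grw [Set.ncard_image_le]
        _ = l - 1 := by rw [Set.ncard_Icc_nat]; omega
  · refine ⟨∅, Set.notMem_empty x, by simp, fun G' hoff _ => ?_⟩
    exact hp.hasLongChordlessCycle_of_adj_iff hc hlp fun a b ha hb =>
      hoff (ne_of_mem_of_not_mem ha hx) (ne_of_mem_of_not_mem hb hx)
end

section
/- Let Π be a graph property characterized by c adjacencies, let G be a graph with vertex cover X, let ℓ ∈ ℕ, and let M ⊆ V(G) \ X be an (ℓ, c)-marking of (G, X). If S ⊆ V(G) and P ⊆ V(G) \ S satisfy G[P] ∈ Π and ℓ ≥ |S| + |P|, then there exists a set P' ⊆ (X ∪ M) \ S with |P'| = |P| and G[P'] ∈ Π. -/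
open SimpleGraph

universe u

/-- The class of graphs `P` is closed under isomorphism. -/
def IsoClosed (P : ∀ {α : Type u}, SimpleGraph α → Prop) : Prop :=
  ∀ {α β : Type u} (G : SimpleGraph α) (G' : SimpleGraph β), Nonempty (G ≃g G') → P G → P G'

/-- `M ⊆ V(G) \ X` is an `(ℓ, c)`-marking of `(G, X)`: for every pair of disjoint sets
`Y⁺, Y⁻ ⊆ X` with `|Y⁺| + |Y⁻| ≤ c`, letting `Z` be the set of vertices outside `X`
adjacent to all of `Y⁺` and none of `Y⁻`, either `Z ⊆ M` or `|Z ∩ M| ≥ ℓ`. -/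
def IsMarking {V : Type*} (G : SimpleGraph V) (X M : Set V) (l c : ℕ) : Prop :=
  Disjoint M X ∧
  ∀ Yp Ym : Set V, Yp ⊆ X → Ym ⊆ X → Disjoint Yp Ym → Yp.ncard + Ym.ncard ≤ c →
    ({z : V | z ∉ X ∧ Yp ⊆ G.neighborSet z ∧ Ym ∩ G.neighborSet z = ∅} ⊆ M ∨
      l ≤ ({z : V | z ∉ X ∧ Yp ⊆ G.neighborSet z ∧ Ym ∩ G.neighborSet z = ∅} ∩ M).ncard)

/-! Induct on the number of vertices of `P` outside `X ∪ M`. For such a vertex `p`, let `D` be the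
at most `c` vertices of `G[P]` whose adjacency to `p` decides membership in `Pi`. The neighbours
and non-neighbours of `p` in `D ∩ X` determine a class of the marking that contains `p ∉ M`, so it
has at least `ℓ ≥ |S| + |P|` marked vertices and one of them, `z`, avoids `S ∪ P`. As `X` is a
vertex cover, neither `p` nor `z` has a neighbour in `D \ X`; hence `z` sees `D` exactly as `p`
does, and exchanging `p` for `z` keeps `G[P]` in `Pi`. -/

theorem ncard_insert_sdiff_singleton_sdiff_lt {α : Type*} [Finite α] {P T : Set α} {p z : α}
    (hp : p ∈ P) (hpT : p ∉ T) (hzT : z ∈ T) :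
    ((insert z P \ {p}) \ T).ncard < (P \ T).ncard := by
  have hsub : (insert z P \ {p}) \ T ⊆ (P \ T) \ {p} := by
    rintro a ⟨⟨rfl | haP, hap⟩, haT⟩
    · exact absurd hzT haT
    · exact ⟨⟨haP, haT⟩, hap⟩
  have := Set.ncard_sdiff_singleton_add_one (show p ∈ P \ T from ⟨hp, hpT⟩)
  have := Set.ncard_le_ncard hsub
  omega

theorem IsVertexCover.not_adj {V : Type*} {G : SimpleGraph V} {X : Set V}
    (hX : _root_.IsVertexCover G X) {a b : V} (ha : a ∉ X) (hb : b ∉ X) : ¬ G.Adj a b :=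
  fun h => (hX h).elim ha hb

theorem CharByAdjAll.exists_forall_swap {Pi : ∀ {α : Type u}, SimpleGraph α → Prop}
    (hiso : IsoClosed Pi) {c : ℕ} (hchar : CharByAdjAll Pi c) {V : Type u} [Finite V]
    [DecidableEq V] {G : SimpleGraph V} {P : Set V} (hPi : Pi (G.induce P)) {p : V}
    (hp : p ∈ P) :
    ∃ D : Set V, D.ncard ≤ c ∧ ∀ z ∉ P, (∀ u ∈ D, G.Adj z u ↔ G.Adj p u) →
      Pi (G.induce (Equiv.swap p z '' P)) := by
  have := Fintype.ofFinite P
  obtain ⟨D, hpD, hDc, hD⟩ := hchar P (G.induce P) hPi ⟨p, hp⟩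
  refine ⟨Subtype.val '' D, (Set.ncard_image_of_injective _ Subtype.val_injective).trans_le hDc,
    fun z hz hzD => ?_⟩
  have hswap_of_ne : ∀ a : P, a ≠ ⟨p, hp⟩ → Equiv.swap p z a = a := fun a ha =>
    Equiv.swap_apply_of_ne_of_ne (fun h => ha (Subtype.ext h)) (ne_of_mem_of_not_mem a.2 hz)
  refine hiso _ _ ⟨Iso.comap ((Equiv.swap p z).image P) _⟩ (hD _ ?_ ?_)
  · intro a b ha hb
    simp [hswap_of_ne a ha, hswap_of_ne b hb]
  · intro u hu
    have hup : u ≠ ⟨p, hp⟩ := fun h => hpD (h ▸ hu)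
    simpa [hswap_of_ne u hup] using hzD u ⟨u, hu, rfl⟩

theorem IsMarking.le_ncard_adj_iff {V : Type*} [Finite V] {G : SimpleGraph V} {X M : Set V}
    {l c : ℕ} (hX : _root_.IsVertexCover G X) (hM : IsMarking G X M l c) {D : Set V}
    (hDc : D.ncard ≤ c) {p : V} (hpX : p ∉ X) (hpM : p ∉ M) :
    l ≤ {z ∈ M | ∀ u ∈ D, G.Adj z u ↔ G.Adj p u}.ncard := by
  set Yp := D ∩ X ∩ G.neighborSet p
  set Ym := (D ∩ X) \ G.neighborSet p
  set Z := {z : V | z ∉ X ∧ Yp ⊆ G.neighborSet z ∧ Ym ∩ G.neighborSet z = ∅}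
  have hYc : Yp.ncard + Ym.ncard ≤ c := by
    rw [Set.ncard_inter_add_ncard_sdiff_eq_ncard]
    exact (Set.ncard_le_ncard Set.inter_subset_left).trans hDc
  have hpZ : p ∈ Z := ⟨hpX, fun _ hu => hu.2, Set.disjoint_iff_inter_eq_empty.mp <|
    Set.disjoint_left.mpr fun _ hu hpu => hu.2 hpu⟩
  have hZM : Z ∩ M ⊆ {z ∈ M | ∀ u ∈ D, G.Adj z u ↔ G.Adj p u} := by
    rintro z ⟨⟨hzX, hzYp, hzYm⟩, hzM⟩
    refine ⟨hzM, fun u hu => ?_⟩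
    by_cases huX : u ∈ X
    · by_cases hpu : G.Adj p u
      · exact iff_of_true (hzYp ⟨⟨hu, huX⟩, hpu⟩) hpu
      · have hzYm' := Set.disjoint_iff_inter_eq_empty.mpr hzYm
        exact iff_of_false (Set.disjoint_left.mp hzYm' ⟨⟨hu, huX⟩, hpu⟩) hpu
    · exact iff_of_false (hX.not_adj hzX huX) (hX.not_adj hpX huX)
  rcases hM.2 Yp Ym (fun _ hu => hu.1.2) (fun _ hu => hu.1.2) Set.disjoint_sdiff_inter.symm hYc
    with hZ | hl
  · exact absurd (hZ hpZ) hpM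
  · exact hl.trans (Set.ncard_le_ncard hZM)

theorem exists_swap_into_marking {V : Type u} [Finite V] [DecidableEq V]
    {Pi : ∀ {α : Type u}, SimpleGraph α → Prop} (hiso : IsoClosed Pi) {c : ℕ}
    (hchar : CharByAdjAll Pi c) {G : SimpleGraph V} {X : Set V}
    (hX : _root_.IsVertexCover G X) {l : ℕ} {M : Set V} (hM : IsMarking G X M l c)
    {S P : Set V} (hPi : Pi (G.induce P)) (hl : S.ncard + P.ncard ≤ l) {p : V} (hp : p ∈ P)
    (hpX : p ∉ X) (hpM : p ∉ M) :
    ∃ z ∈ M, z ∉ S ∧ z ∉ P ∧ Pi (G.induce (Equiv.swap p z '' P)) := by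
  obtain ⟨D, hDc, hswap⟩ := hchar.exists_forall_swap hiso hPi hp
  have hcard : (S ∪ P \ {p}).ncard < {z ∈ M | ∀ u ∈ D, G.Adj z u ↔ G.Adj p u}.ncard := by
    have := Set.ncard_sdiff_singleton_add_one hp
    have := Set.ncard_union_le S (P \ {p})
    have := hM.le_ncard_adj_iff hX hDc hpX hpM
    omega
  obtain ⟨z, ⟨hzM, hzD⟩, hz⟩ := Set.exists_mem_notMem_of_ncard_lt_ncard hcard
  have hzP : z ∉ P := fun hzP => hz (.inr ⟨hzP, fun hzp => hpM (hzp ▸ hzM)⟩)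
  exact ⟨z, hzM, fun hzS => hz (.inl hzS), hzP, hswap z hzP hzD⟩

/-- Let `Pi` be a graph property characterized by `c` adjacencies, `G` a graph with
vertex cover `X`, and `M` an `(ℓ, c)`-marking of `(G, X)`. If `S ⊆ V(G)` and
`P ⊆ V(G) \ S` satisfy `G[P] ∈ Pi` and `ℓ ≥ |S| + |P|`, then there is a set
`P' ⊆ (X ∪ M) \ S` with `|P'| = |P|` and `G[P'] ∈ Pi`. -/
theorem stmt10 {V : Type u} [Fintype V]
    (Pi : ∀ {α : Type u}, SimpleGraph α → Prop)
    (hiso : IsoClosed fun {α} (G : SimpleGraph α) => Pi G)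
    (c : ℕ) (hchar : CharByAdjAll (fun {α} (G : SimpleGraph α) => Pi G) c)
    (G : SimpleGraph V) (X : Set V) (hX : _root_.IsVertexCover G X)
    (l : ℕ) (M : Set V) (hM : IsMarking G X M l c)
    (S P : Set V) (hPS : Disjoint P S) (hPi : Pi (G.induce P))
    (hl : S.ncard + P.ncard ≤ l) :
    ∃ P' : Set V, P' ⊆ (X ∪ M) \ S ∧ P'.ncard = P.ncard ∧ Pi (G.induce P') := by
  classical
  induction hn : (P \ (X ∪ M)).ncard using Nat.strong_induction_on generalizing P with
  | _ n ih =>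
  by_cases hsub : P ⊆ X ∪ M
  · exact ⟨P, Set.subset_sdiff.mpr ⟨hsub, hPS⟩, rfl, hPi⟩
  obtain ⟨p, hp, hpXM⟩ := Set.not_subset.mp hsub
  obtain ⟨z, hzM, hzS, hzP, hPi₁⟩ := exists_swap_into_marking hiso hchar hX hM hPi hl hp
    (fun h => hpXM (.inl h)) (fun h => hpXM (.inr h))
  have hcard : (Equiv.swap p z '' P).ncard = P.ncard :=
    Set.ncard_image_of_injective _ (Equiv.injective _)
  rw [Equiv.image_swap_of_mem_of_notMem hp hzP] at hPi₁ hcard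
  have hPS₁ : Disjoint (insert z P \ {p}) S :=
    (Set.disjoint_insert_left.mpr ⟨hzS, hPS⟩).mono_left Set.sdiff_subset
  have hbad : ((insert z P \ {p}) \ (X ∪ M)).ncard < n :=
    hn ▸ ncard_insert_sdiff_singleton_sdiff_lt hp hpXM (.inr hzM)
  obtain ⟨P', hP'sub, hP'card, hP'Pi⟩ := ih _ hbad _ hPS₁ hPi₁ (hcard ▸ hl) rfl
  exact ⟨P', hP'sub, hP'card.trans hcard, hP'Pi⟩
end

section
/- Let Π be a graph property characterized by c adjacencies, and let p : ℕ → ℕ be a nondecreasing function such that every graph G* that is vertex-minimal with respect to Π satisfies |V(G*)| ≤ p(vc(G*)). Let q ≥ 1 be an integer, let G be a graph with vertex cover X, and let M ⊆ V(G) \ X be a (q·p(|X|), q·c)-marking of (G, X). If the vertex set of the induced subgraph G[X ∪ M] can be partitioned into q parts each of which induces a subgraph containing no member of Π as an induced subgraph, then V(G) can be partitioned into q parts each of which induces a subgraph of G containing no member of Π as an induced subgraph. -/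
/-! Add the vertices outside `X ∪ M` one at a time. If a vertex `z ∉ X ∪ M` fits into no part,
every part `i` together with `z` contains a vertex-minimal member `H i` of `Π`; it contains `z`,
has at most `p(|X|)` vertices, and stays in `Π` when `z` is replaced by any vertex with the same
adjacencies to a set `D i` of at most `c` vertices. The marking, applied to the neighbours and
non-neighbours of `z` in `X ∩ ⋃ D i`, yields `q·p(|X|)` marked such twins of `z`, while the sets
`H i \ {z}` have fewer than `q·p(|X|)` vertices in total. So some marked twin `z'` avoids all
`H i`, and if `z'` lies in part `j`, replacing `z` by `z'` in `H j` puts a member of `Π` inside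
part `j`. -/

open SimpleGraph

universe u

def VertexMinimal (Pi : ∀ {α : Type u}, SimpleGraph α → Prop) {α : Type u}
    (G : SimpleGraph α) : Prop :=
  Pi G ∧ ∀ S : Set α, S ≠ Set.univ → ¬ Pi (G.induce S)

open Function

noncomputable def SimpleGraph.induceComapIso {V W : Type*} (G : SimpleGraph W) (f : V ↪ W)
    (S : Set V) : (G.comap f).induce S ≃g G.induce (f '' S) where
  toEquiv := Equiv.Set.image f S f.injective
  map_rel_iff' := by simp

lemma vcNum_induce_le {V : Type*} [Finite V] {G : SimpleGraph V} {X : Set V}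
    (hX : _root_.IsVertexCover G X) (H : Set V) : vcNum (G.induce H) ≤ X.ncard := by
  have hcov : _root_.IsVertexCover (G.induce H) (Subtype.val ⁻¹' X) := fun _ _ hab => hX hab
  calc vcNum (G.induce H) ≤ (Subtype.val ⁻¹' X : Set H).ncard := Nat.sInf_le ⟨_, hcov, rfl⟩
    _ = (Subtype.val '' (Subtype.val ⁻¹' X : Set H)).ncard :=
      (Set.ncard_image_of_injective _ Subtype.val_injective).symm
    _ ≤ X.ncard := Set.ncard_le_ncard (Set.image_preimage_subset _ _)

section
variable {V : Type u} {Pi : ∀ {α : Type u}, SimpleGraph α → Prop}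

lemma vertexMinimal_induce_of_minimal (hiso : IsoClosed fun {α} (G : SimpleGraph α) => Pi G)
    {G : SimpleGraph V} {H : Set V}
    (hH : Minimal (fun T => Pi (G.induce T)) H) :
    VertexMinimal (fun {β} (G₁ : SimpleGraph β) => Pi G₁) (G.induce H) := by
  refine ⟨hH.prop, fun S hS hPi => hS ?_⟩
  have hPi' : Pi (G.induce (Subtype.val '' S)) :=
    hiso _ _ ⟨G.induceComapIso (Embedding.subtype _) S⟩ hPi
  have hHS : H ⊆ Subtype.val '' S := hH.2 hPi' (Subtype.coe_image_subset H S)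
  exact Set.eq_univ_of_forall fun a => by
    obtain ⟨b, hb, hba⟩ := hHS a.2
    rwa [← Subtype.ext hba]

lemma ncard_le_of_minimal [Finite V] (hiso : IsoClosed fun {α} (G : SimpleGraph α) => Pi G)
    {p : ℕ → ℕ} (hp : Monotone p)
    (hmin : ∀ (α : Type u) [Fintype α] (G₀ : SimpleGraph α),
      VertexMinimal (fun {β} (G₁ : SimpleGraph β) => Pi G₁) G₀ →
      Fintype.card α ≤ p (vcNum G₀))
    {G : SimpleGraph V} {X : Set V} (hX : _root_.IsVertexCover G X) {H : Set V}
    (hH : Minimal (fun T => Pi (G.induce T)) H) :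
    H.ncard ≤ p X.ncard := by
  have := Fintype.ofFinite H
  calc H.ncard = Fintype.card H := (Nat.card_coe_set_eq H).symm.trans Nat.card_eq_fintype_card
    _ ≤ p (vcNum (G.induce H)) := hmin H _ (vertexMinimal_induce_of_minimal hiso hH)
    _ ≤ p X.ncard := hp (vcNum_induce_le hX H)

lemma CharByAdjAll.exists_induce_swap [Finite V] [DecidableEq V] {c : ℕ}
    (hchar : CharByAdjAll (fun {α} (G : SimpleGraph α) => Pi G) c)
    (hiso : IsoClosed fun {α} (G : SimpleGraph α) => Pi G) {G : SimpleGraph V} {H : Set V}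
    (hH : Pi (G.induce H)) {z : V} (hz : z ∈ H) :
    ∃ D : Set V, D.ncard ≤ c ∧ ∀ z' ∉ H, (∀ u ∈ D, G.Adj z' u ↔ G.Adj z u) →
      Pi (G.induce (Equiv.swap z z' '' H)) := by
  have := Fintype.ofFinite H
  obtain ⟨D, hzD, hDc, hD⟩ := hchar H (G.induce H) hH ⟨z, hz⟩
  refine ⟨Subtype.val '' D, (Set.ncard_image_of_injective _ Subtype.val_injective).trans_le hDc,
    fun z' hz' htwin => ?_⟩
  have hfix : ∀ a : H, a ≠ ⟨z, hz⟩ → Equiv.swap z z' a = a := fun a ha =>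
    Equiv.swap_apply_of_ne_of_ne (fun h => ha (Subtype.ext h)) (ne_of_mem_of_not_mem a.2 hz')
  refine hiso _ _ ⟨G.induceComapIso (Equiv.swap z z').toEmbedding H⟩ (hD _ ?_ ?_)
  · intro a b ha hb
    simp [hfix a ha, hfix b hb]
  · intro u hu
    have hu' : u ≠ ⟨z, hz⟩ := fun h => hzD (h ▸ hu)
    simpa [hfix u hu'] using htwin u ⟨u, hu, rfl⟩
end

lemma Set.ncard_iUnion_le_card_mul {α ι : Type*} [Fintype ι] {s : ι → Set α} {k : ℕ}
    (h : ∀ i, (s i).ncard ≤ k) : (⋃ i, s i).ncard ≤ Fintype.card ι * k :=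
  (Set.ncard_iUnion_le_of_fintype s).trans ((Finset.sum_le_sum fun i _ => h i).trans_eq (by simp))

lemma IsMarking.le_ncard_twins {V : Type*} [Finite V] {G : SimpleGraph V} {X M : Set V}
    {l c : ℕ} (hM : IsMarking G X M l c) (hX : _root_.IsVertexCover G X) {z : V}
    (hzX : z ∉ X) (hzM : z ∉ M) {D : Set V} (hD : D.ncard ≤ c) :
    l ≤ {z' ∈ M | ∀ u ∈ D, G.Adj z' u ↔ G.Adj z u}.ncard := by
  set Yp := D ∩ X ∩ G.neighborSet z
  set Ym := (D ∩ X) \ G.neighborSet z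
  have hsize : Yp.ncard + Ym.ncard ≤ c :=
    (Set.ncard_inter_add_ncard_sdiff_eq_ncard _ _).trans_le
      ((Set.ncard_le_ncard Set.inter_subset_left).trans hD)
  have hzZ : z ∈ {w | w ∉ X ∧ Yp ⊆ G.neighborSet w ∧ Ym ∩ G.neighborSet w = ∅} :=
    ⟨hzX, Set.inter_subset_right, Set.sdiff_inter_self⟩
  obtain hZM | hl := hM.2 Yp Ym (fun u hu => hu.1.2) (fun u hu => hu.1.2)
    Set.disjoint_sdiff_inter.symm hsize
  · exact absurd (hZM hzZ) hzM
  refine hl.trans (Set.ncard_le_ncard ?_)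
  rintro w ⟨⟨hwX, hYp, hYm⟩, hwM⟩
  refine ⟨hwM, fun u hu => ?_⟩
  by_cases huX : u ∈ X
  · by_cases hzu : G.Adj z u
    · exact iff_of_true (hYp ⟨⟨hu, huX⟩, hzu⟩) hzu
    · exact iff_of_false (fun hwu => (hYm.subset ⟨⟨⟨hu, huX⟩, hzu⟩, hwu⟩ : u ∈ (∅ : Set V)))
        hzu
  · have hnadj : ∀ {v}, v ∉ X → ¬ G.Adj v u := fun hv h => (hX h).elim hv huX
    exact iff_of_false (hnadj hwX) (hnadj hzX)

lemma Set.swap_image_subset {α : Type*} [DecidableEq α] {H P : Set α} {z z' : α}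
    (hz' : z' ∉ H) (hH : H ⊆ insert z P) (hz'P : z' ∈ P) : Equiv.swap z z' '' H ⊆ P := by
  rintro _ ⟨a, ha, rfl⟩
  obtain rfl | haz := eq_or_ne a z
  · simpa using hz'P
  · rw [Equiv.swap_apply_of_ne_of_ne haz (ne_of_mem_of_not_mem ha hz')]
    exact (Set.mem_insert_iff.mp (hH ha)).resolve_left haz

lemma exists_insert_free {V : Type u} {ι : Type*} [Fintype V] [Fintype ι] [Nonempty ι]
    {Pi : ∀ {α : Type u}, SimpleGraph α → Prop}
    (hiso : IsoClosed fun {α} (G : SimpleGraph α) => Pi G)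
    {c : ℕ} (hchar : CharByAdjAll (fun {α} (G : SimpleGraph α) => Pi G) c)
    {p : ℕ → ℕ} (hp : Monotone p)
    (hmin : ∀ (α : Type u) [Fintype α] (G₀ : SimpleGraph α),
      VertexMinimal (fun {β} (G₁ : SimpleGraph β) => Pi G₁) G₀ →
      Fintype.card α ≤ p (vcNum G₀))
    {G : SimpleGraph V} {X M : Set V} (hX : _root_.IsVertexCover G X)
    (hM : IsMarking G X M (Fintype.card ι * p X.ncard) (Fintype.card ι * c))
    {parts : ι → Set V} (hXM : X ∪ M ⊆ ⋃ i, parts i)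
    (hfree : ∀ i, ∀ T ⊆ parts i, ¬ Pi (G.induce T)) {z : V} (hz : z ∉ ⋃ i, parts i) :
    ∃ i, ∀ T ⊆ insert z (parts i), ¬ Pi (G.induce T) := by
  classical
  by_contra! hbad
  choose T hT hPiT using hbad
  choose H hHT hH using fun i =>
    exists_minimal_le_of_wellFoundedLT (fun S => Pi (G.induce S)) (T i) (hPiT i)
  have hHparts : ∀ i, H i ⊆ insert z (parts i) := fun i => (hHT i).trans (hT i)
  have hzH : ∀ i, z ∈ H i := fun i => by_contra fun hzH =>
    hfree i _ ((Set.subset_insert_iff_of_notMem hzH).mp (hHparts i)) (hH i).prop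
  have hHp : ∀ i, (H i).ncard ≤ p X.ncard := fun i => ncard_le_of_minimal hiso hp hmin hX (hH i)
  choose D hDc hD using fun i => hchar.exists_induce_swap hiso (hH i).prop (hzH i)
  have hDsize : (⋃ i, D i).ncard ≤ Fintype.card ι * c := Set.ncard_iUnion_le_card_mul hDc
  have hused : (⋃ i, H i \ {z}).ncard < Fintype.card ι * p X.ncard := by
    have hHz : ∀ i, (H i \ {z}).ncard ≤ p X.ncard - 1 := fun i => by
      rw [Set.ncard_sdiff_singleton_of_mem (hzH i)]
      exact Nat.sub_le_sub_right (hHp i) 1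
    have hp0 : 0 < p X.ncard :=
      ((Set.ncard_pos (H (Classical.arbitrary ι)).toFinite).mpr ⟨z, hzH _⟩).trans_le (hHp _)
    refine (Set.ncard_iUnion_le_card_mul hHz).trans_lt ?_
    exact (Nat.mul_lt_mul_left Fintype.card_pos).mpr (Nat.sub_lt hp0 one_pos)
  have hzX : z ∉ X := fun h => hz (hXM (Or.inl h))
  have hzM : z ∉ M := fun h => hz (hXM (Or.inr h))
  obtain ⟨z', ⟨hz'M, hz'twin⟩, hz'H⟩ := Set.exists_mem_notMem_of_ncard_lt_ncard
    (hused.trans_le (hM.le_ncard_twins hX hzX hzM hDsize))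
  obtain ⟨j, hz'j⟩ := Set.mem_iUnion.mp (hXM (Or.inr hz'M))
  have hz'z : z' ≠ z := fun h => hz (Set.mem_iUnion.mpr ⟨j, h ▸ hz'j⟩)
  have hz'Hj : z' ∉ H j := fun h => hz'H (Set.mem_iUnion.mpr ⟨j, h, hz'z⟩)
  exact hfree j _ (Set.swap_image_subset hz'Hj (hHparts j) hz'j)
    (hD j z' hz'Hj fun u hu => hz'twin u (Set.mem_iUnion.mpr ⟨j, hu⟩))

lemma iUnion_update_insert {α ι : Type*} [DecidableEq ι] (s : ι → Set α) (i : ι) (a : α) :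
    ⋃ j, update s i (insert a (s i)) j = insert a (⋃ j, s j) := by
  ext x
  simp only [Set.mem_iUnion, Set.mem_insert_iff]
  constructor
  · rintro ⟨j, hj⟩
    obtain rfl | hji := eq_or_ne j i
    · rw [update_self] at hj
      exact hj.imp_right fun hx => ⟨j, hx⟩
    · rw [update_of_ne hji] at hj
      exact Or.inr ⟨j, hj⟩
  · rintro (rfl | ⟨j, hj⟩)
    · exact ⟨i, by simp⟩
    · obtain rfl | hji := eq_or_ne j i
      · exact ⟨j, by simp [hj]⟩
      · exact ⟨j, by simpa [hji] using hj⟩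

lemma pairwise_disjoint_update_insert {α ι : Type*} [DecidableEq ι] {s : ι → Set α}
    (hs : Pairwise (Disjoint on s)) (i : ι) {a : α} (ha : a ∉ ⋃ j, s j) :
    Pairwise (Disjoint on update s i (insert a (s i))) := by
  intro j k hjk
  simp only [Set.mem_iUnion, not_exists] at ha
  simp only [onFun, update_apply]
  split_ifs with hj hk hk
  · exact absurd (hj.trans hk.symm) hjk
  · subst hj
    exact Set.disjoint_insert_left.mpr ⟨ha k, hs hjk⟩
  · subst hk
    exact Set.disjoint_insert_right.mpr ⟨ha j, hs hjk⟩
  · exact hs hjk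

lemma exists_cover_of_forall_exists_insert {α ι : Type*} [Finite α] [DecidableEq ι]
    (Free : Set α → Prop) (S : Set α)
    (hext : ∀ s : ι → Set α, S ⊆ ⋃ i, s i → (∀ i, Free (s i)) →
      ∀ a ∉ ⋃ i, s i, ∃ i, Free (insert a (s i)))
    (s : ι → Set α) (hS : S ⊆ ⋃ i, s i) (hdisj : Pairwise (Disjoint on s))
    (hfree : ∀ i, Free (s i)) :
    ∃ t : ι → Set α, Pairwise (Disjoint on t) ∧ ⋃ i, t i = Set.univ ∧ ∀ i, Free (t i) := by
  induction hn : (⋃ i, s i)ᶜ.ncard using Nat.strong_induction_on generalizing s with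
  | _ n ih =>
  by_cases hcov : ⋃ i, s i = Set.univ
  · exact ⟨s, hdisj, hcov, hfree⟩
  obtain ⟨a, ha⟩ := (Set.ne_univ_iff_exists_notMem _).mp hcov
  obtain ⟨i, hi⟩ := hext s hS hfree a ha
  have hunion := iUnion_update_insert s i a
  refine ih _ ?_ _ (hunion ▸ hS.trans (Set.subset_insert _ _))
    (pairwise_disjoint_update_insert hdisj i ha)
    ((forall_update_iff s fun _ t => Free t).mpr ⟨hi, fun j _ => hfree j⟩) rfl
  rw [hunion, ← hn]
  exact Set.ncard_lt_ncard (compl_lt_compl_iff_lt.mpr (Set.ssubset_insert ha))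

/-- Let `Pi` be a graph property characterized by `c` adjacencies, `p` a nondecreasing
function such that every graph vertex-minimal with respect to `Pi` has at most
`p(vc)` vertices, `q ≥ 1`, `G` a graph with vertex cover `X`, and `M` a
`(q·p(|X|), q·c)`-marking of `(G, X)`. If the vertices of `G[X ∪ M]` can be partitioned
into `q` parts each inducing a subgraph with no induced subgraph in `Pi`, then `V(G)` can
be partitioned into `q` parts each inducing a subgraph with no induced subgraph in `Pi`. -/
theorem stmt11 {V : Type u} [Fintype V]
    (Pi : ∀ {α : Type u}, SimpleGraph α → Prop)
    (hiso : IsoClosed fun {α} (G : SimpleGraph α) => Pi G)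
    (c : ℕ) (hchar : CharByAdjAll (fun {α} (G : SimpleGraph α) => Pi G) c)
    (p : ℕ → ℕ) (hp : Monotone p)
    (hmin : ∀ (α : Type u) [Fintype α] (G₀ : SimpleGraph α),
      VertexMinimal (fun {β} (G₁ : SimpleGraph β) => Pi G₁) G₀ →
      Fintype.card α ≤ p (vcNum G₀))
    (q : ℕ) (hq : 1 ≤ q)
    (G : SimpleGraph V) (X : Set V) (hX : _root_.IsVertexCover G X)
    (M : Set V) (hM : IsMarking G X M (q * p X.ncard) (q * c))
    (hpart : ∃ parts : Fin q → Set V,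
      (∀ i j, i ≠ j → Disjoint (parts i) (parts j)) ∧
      (⋃ i, parts i) = X ∪ M ∧
      ∀ i, ∀ T : Set V, T ⊆ parts i → ¬ Pi (G.induce T)) :
    ∃ parts : Fin q → Set V,
      (∀ i j, i ≠ j → Disjoint (parts i) (parts j)) ∧
      (⋃ i, parts i) = Set.univ ∧
      ∀ i, ∀ T : Set V, T ⊆ parts i → ¬ Pi (G.induce T) := by
  obtain ⟨parts, hdisj, hcov, hfree⟩ := hpart
  have : Nonempty (Fin q) := ⟨⟨0, hq⟩⟩
  rw [← Fintype.card_fin q] at hM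
  exact exists_cover_of_forall_exists_insert (fun A => ∀ T ⊆ A, ¬ Pi (G.induce T)) (X ∪ M)
    (fun _ hXM hfree' _ hz => exists_insert_free hiso hchar hp hmin hX hM hXM hfree' hz)
    parts hcov.ge hdisj hfree
end

section
/- Let G be a graph with vertex cover X, let t ≤ |X| + 1, and let v, w ∈ X be distinct nonadjacent vertices such that more than (|X| + 1)² vertices of V(G) \ X are adjacent to both v and w. Let G' be the graph obtained from G by adding the edge vw. Then G contains the complete graph K_t as a minor if and only if G' contains K_t as a minor. -/
open SimpleGraph

universe u v

/-!
Adding `vw` can only create minors, so the content is the converse. A `K_t` model in `G + vw`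
that leaves some common neighbour `z ∉ X` of `v` and `w` unused yields one in `G`: put `z` into
the branch set containing `v` and route the edge `vw` through `z`.

If every common neighbour is used, one of them can be freed. Since `V \ X` is independent, a
connected branch set `B` with `Y = B ∩ X` has fewer than `|Y|` vertices outside `Y` whose removal
disconnects it (split `B` at such a vertex and induct on `|Y|`), and at most `t - 1` vertices that
are its only contact with some other branch set. As `t ≤ |X| + 1`, the branch sets with fewer than
`|B ∩ X| + t` common neighbours hold at most `|X| + t(t - 1) < (|X| + 1)²` of them in total, so
some branch set has `|B ∩ X| + t` and one of those can be dropped from it.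
-/

open Function Set

namespace SimpleGraph

theorem Preconnected.of_surjective_of_adj_reachable {α β : Type*} {G : SimpleGraph α}
    {H : SimpleGraph β} (hG : G.Preconnected) {f : α → β} (hf : Surjective f)
    (h : ∀ ⦃a b⦄, G.Adj a b → H.Reachable (f a) (f b)) : H.Preconnected := by
  intro x y
  obtain ⟨a, rfl⟩ := hf x
  obtain ⟨b, rfl⟩ := hf y
  induction (reachable_iff_reflTransGen a b).1 (hG a b) with
  | refl => rfl
  | tail _ hbc ih => exact ih.trans (h hbc)

theorem Connected.of_adj_reachable {α : Type*} {G H : SimpleGraph α} (hG : G.Connected)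
    (h : ∀ ⦃a b⦄, G.Adj a b → H.Reachable a b) : H.Connected :=
  have := hG.nonempty
  ⟨hG.preconnected.of_surjective_of_adj_reachable surjective_id h⟩

variable {V : Type*} {G : SimpleGraph V}

theorem induce_connected_insert_of_closed {B S : Set V} {u : V} (hB : (G.induce B).Connected)
    (hu : u ∈ B) (hSB : S ⊆ B) (hS : ∀ x ∈ S, ∀ y ∈ B \ {u}, G.Adj x y → y ∈ S) :
    (G.induce (insert u S)).Connected := by
  classical
  have hleave : ∀ ⦃x y : V⦄, G.Adj x y → x ∈ insert u S → y ∈ B → y ∉ insert u S → x = u := by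
    rintro x y hxy (rfl | hx) hy hyS
    · rfl
    · exact absurd (mem_insert_of_mem u (hS x hx y ⟨hy, fun h => hyS (h ▸ mem_insert y S)⟩ hxy)) hyS
  -- collapse everything outside `insert u S` onto `u`
  let f : B → ↥(insert u S) := fun x =>
    if hx : x.1 ∈ insert u S then ⟨x, hx⟩ else ⟨u, mem_insert u S⟩
  have hf_mem : ∀ x (hx : x.1 ∈ insert u S), f x = ⟨x, hx⟩ := fun x hx => dif_pos hx
  have hf_notMem : ∀ x, x.1 ∉ insert u S → f x = ⟨u, mem_insert u S⟩ := fun x hx => dif_neg hx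
  have : Nonempty ↥(insert u S) := ⟨⟨u, mem_insert u S⟩⟩
  refine ⟨hB.preconnected.of_surjective_of_adj_reachable (f := f) ?_ ?_⟩
  · rintro ⟨x, hx⟩
    exact ⟨⟨x, insert_subset hu hSB hx⟩, hf_mem ⟨x, _⟩ hx⟩
  · rintro ⟨x, hxB⟩ ⟨y, hyB⟩ hxy
    by_cases hx : x ∈ insert u S <;> by_cases hy : y ∈ insert u S
    · rw [hf_mem ⟨x, hxB⟩ hx, hf_mem ⟨y, hyB⟩ hy]
      exact Adj.reachable hxy
    · rw [hf_mem ⟨x, hxB⟩ hx, hf_notMem ⟨y, hyB⟩ hy]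
      obtain rfl := hleave hxy hx hyB hy
      rfl
    · rw [hf_notMem ⟨x, hxB⟩ hx, hf_mem ⟨y, hyB⟩ hy]
      obtain rfl := hleave hxy.symm hy hxB hx
      rfl
    · rw [hf_notMem ⟨x, hxB⟩ hx, hf_notMem ⟨y, hyB⟩ hy]

theorem inter_nonempty_of_isIndepSet_sdiff {B Y : Set V} (hB : (G.induce B).Connected)
    (hBY : G.IsIndepSet (B \ Y)) (hnt : B.Nontrivial) : (B ∩ Y).Nonempty := by
  obtain ⟨x, hx, y, hy, hxy⟩ := hnt
  by_cases hxY : x ∈ Y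
  · exact ⟨x, hx, hxY⟩
  have : Nontrivial B := ⟨⟨x, hx⟩, ⟨y, hy⟩, fun h => hxy (congrArg Subtype.val h)⟩
  obtain ⟨⟨z, hz⟩, hxz⟩ := hB.preconnected.exists_adj_of_nontrivial ⟨x, hx⟩
  by_contra hBY'
  exact hBY ⟨hx, hxY⟩ ⟨hz, fun hzY => hBY' ⟨z, hz, hzY⟩⟩ (show G.Adj x z from hxz).ne hxz

-- `u` counts when `B = {u}`: the empty graph is not connected.
def separatingVertices (G : SimpleGraph V) (B : Set V) : Set V :=
  {u ∈ B | ¬ (G.induce (B \ {u})).Connected}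

theorem exists_split_of_mem_separatingVertices {B : Set V} {u : V} (hB : (G.induce B).Connected)
    (hu : u ∈ G.separatingVertices B) (hne : (B \ {u}).Nonempty) :
    ∃ B₁ B₂ : Set V, B₁ ∪ B₂ = B ∧ B₁ ∩ B₂ = {u} ∧ (G.induce B₁).Connected ∧
      (G.induce B₂).Connected ∧ B₁.Nontrivial ∧ B₂.Nontrivial := by
  obtain ⟨huB, hcut⟩ := hu
  set s := B \ {u}
  have : Nonempty s := hne.to_subtype
  obtain ⟨a, b, hab⟩ : ∃ a b : s, ¬ (G.induce s).Reachable a b := by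
    by_contra! h
    exact hcut ⟨h⟩
  set K : Set V := {x | ∃ hx : x ∈ s, (G.induce s).Reachable a ⟨x, hx⟩}
  have hKs : K ⊆ s := fun x ⟨hx, _⟩ => hx
  have hK : ∀ x ∈ K, ∀ y ∈ s, G.Adj x y → y ∈ K := fun x ⟨hx, hax⟩ y hy hxy =>
    ⟨hy, hax.trans (Adj.reachable (G := G.induce s) (u := ⟨x, hx⟩) (v := ⟨y, hy⟩) hxy)⟩
  have hne_u : ∀ x : s, x.1 ≠ u := fun x => x.2.2
  refine ⟨insert u K, insert u (s \ K), ?_, ?_, ?_, ?_, ?_, ?_⟩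
  · rw [← insert_union_distrib, union_sdiff_cancel hKs, insert_sdiff_singleton,
      insert_eq_of_mem huB]
  · rw [← insert_inter_distrib, inter_sdiff_self, insert_empty_eq]
  · exact induce_connected_insert_of_closed hB huB (hKs.trans sdiff_subset)
      fun x hx y hy hxy => hK x hx y hy hxy
  · exact induce_connected_insert_of_closed hB huB (sdiff_subset.trans sdiff_subset)
      fun x hx y hy hxy => ⟨hy, fun hyK => hx.2 (hK y hyK x hx.1 hxy.symm)⟩
  · exact ⟨u, mem_insert u K, a, mem_insert_of_mem u ⟨a.2, .rfl⟩, (hne_u a).symm⟩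
  · exact ⟨u, mem_insert _ _, b, mem_insert_of_mem u ⟨b.2, fun ⟨_, hb⟩ => hab hb⟩,
      (hne_u b).symm⟩

theorem mem_separatingVertices_of_mem_union_left {B₁ B₂ : Set V} {u c : V}
    (h₂ : (G.induce B₂).Connected) (hinter : B₁ ∩ B₂ = {u}) (hc : c ∈ B₁) (hcu : c ≠ u)
    (hcut : c ∈ G.separatingVertices (B₁ ∪ B₂)) : c ∈ G.separatingVertices B₁ := by
  have hu : u ∈ B₁ ∩ B₂ := hinter ▸ rfl
  have hc₂ : c ∉ B₂ := fun h => hcu (by rw [← mem_singleton_iff, ← hinter]; exact ⟨hc, h⟩)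
  refine ⟨hc, fun h₁ => hcut.2 ?_⟩
  rw [union_sdiff_distrib, sdiff_singleton_eq_self hc₂]
  exact induce_union_connected h₁.preconnected h₂.preconnected ⟨u, ⟨hu.1, hcu.symm⟩, hu.2⟩

theorem separatingVertices_union_subset {B₁ B₂ : Set V} {u : V} (h₁ : (G.induce B₁).Connected)
    (h₂ : (G.induce B₂).Connected) (hinter : B₁ ∩ B₂ = {u}) :
    G.separatingVertices (B₁ ∪ B₂) ⊆
      insert u (G.separatingVertices B₁ ∪ G.separatingVertices B₂) := by
  intro c hc
  rcases eq_or_ne c u with rfl | hcu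
  · exact mem_insert c _
  refine mem_insert_of_mem u ?_
  rcases hc.1 with hc₁ | hc₂
  · exact Or.inl (mem_separatingVertices_of_mem_union_left h₂ hinter hc₁ hcu hc)
  · rw [union_comm] at hc
    rw [inter_comm] at hinter
    exact Or.inr (mem_separatingVertices_of_mem_union_left h₁ hinter hc₂ hcu hc)

theorem ncard_separatingVertices_sdiff_lt [Finite V] {B Y : Set V} (hB : (G.induce B).Connected)
    (hYB : Y ⊆ B) (hY : Y.Nonempty) (hind : G.IsIndepSet (B \ Y)) :
    (G.separatingVertices B \ Y).ncard < Y.ncard := by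
  induction hn : Y.ncard using Nat.strong_induction_on generalizing B Y with
  | _ n ih =>
  subst hn
  obtain hempty | ⟨u, hu, huY⟩ := (G.separatingVertices B \ Y).eq_empty_or_nonempty
  · rw [hempty, ncard_empty]
    exact (ncard_pos).2 hY
  have hne : (B \ {u}).Nonempty := hY.mono fun y hy => ⟨hYB hy, fun h => huY (h ▸ hy)⟩
  obtain ⟨B₁, B₂, rfl, hinter, h₁, h₂, hnt₁, hnt₂⟩ :=
    exists_split_of_mem_separatingVertices hB hu hne
  have hind₁ : G.IsIndepSet (B₁ \ Y) := hind.mono (sdiff_subset_sdiff_left subset_union_left)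
  have hind₂ : G.IsIndepSet (B₂ \ Y) := hind.mono (sdiff_subset_sdiff_left subset_union_right)
  have hY₁ := inter_nonempty_of_isIndepSet_sdiff h₁ hind₁ hnt₁
  have hY₂ := inter_nonempty_of_isIndepSet_sdiff h₂ hind₂ hnt₂
  have hdisj : Disjoint (B₁ ∩ Y) (B₂ ∩ Y) := by
    rw [Set.disjoint_left]
    rintro x ⟨hx₁, hxY⟩ ⟨hx₂, -⟩
    have hxu : x = u := by rw [← mem_singleton_iff, ← hinter]; exact ⟨hx₁, hx₂⟩
    exact huY (hxu ▸ hxY)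
  have hcard : (B₁ ∩ Y).ncard + (B₂ ∩ Y).ncard = Y.ncard := by
    rw [← ncard_union_eq hdisj, ← union_inter_distrib_right, inter_eq_right.2 hYB]
  have ih₁ := ih _ (by have := (ncard_pos).2 hY₂; omega) h₁ inter_subset_left hY₁
    (by rwa [sdiff_self_inter]) rfl
  have ih₂ := ih _ (by have := (ncard_pos).2 hY₁; omega) h₂ inter_subset_left hY₂
    (by rwa [sdiff_self_inter]) rfl
  have hsub : G.separatingVertices (B₁ ∪ B₂) \ Y ⊆ insert u
      ((G.separatingVertices B₁ \ (B₁ ∩ Y)) ∪ (G.separatingVertices B₂ \ (B₂ ∩ Y))) := by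
    rintro x ⟨hx, hxY⟩
    rcases separatingVertices_union_subset h₁ h₂ hinter hx with rfl | hx₁ | hx₂
    · exact mem_insert x _
    · exact mem_insert_of_mem u (Or.inl ⟨hx₁, fun h => hxY h.2⟩)
    · exact mem_insert_of_mem u (Or.inr ⟨hx₂, fun h => hxY h.2⟩)
  calc (G.separatingVertices (B₁ ∪ B₂) \ Y).ncard
      ≤ ((G.separatingVertices B₁ \ (B₁ ∩ Y)) ∪
          (G.separatingVertices B₂ \ (B₂ ∩ Y))).ncard + 1 :=
        (ncard_le_ncard hsub).trans (ncard_insert_le _ _)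
    _ ≤ (G.separatingVertices B₁ \ (B₁ ∩ Y)).ncard +
          (G.separatingVertices B₂ \ (B₂ ∩ Y)).ncard + 1 := by
        gcongr
        exact ncard_union_le _ _
    _ < Y.ncard := by omega

theorem ncard_setOf_unique_attachment_le [Finite V] {ι : Type*} (s : Finset ι) (A : Set V)
    (φ : ι → Set V) (h : ∀ i ∈ s, ∃ a ∈ A, ∃ b ∈ φ i, G.Adj a b) :
    {z | ∃ i ∈ s, ∀ a ∈ A, ∀ b ∈ φ i, G.Adj a b → a = z}.ncard ≤ s.card := by
  calc {z | ∃ i ∈ s, ∀ a ∈ A, ∀ b ∈ φ i, G.Adj a b → a = z}.ncard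
      = (⋃ i ∈ s, {z | ∀ a ∈ A, ∀ b ∈ φ i, G.Adj a b → a = z}).ncard := by
        congr 1
        ext z
        simp
    _ ≤ ∑ i ∈ s, {z | ∀ a ∈ A, ∀ b ∈ φ i, G.Adj a b → a = z}.ncard :=
        s.set_ncard_biUnion_le _
    _ ≤ ∑ _i ∈ s, 1 := by
        refine Finset.sum_le_sum fun i hi => (ncard_le_one_iff).2 fun hz hz' => ?_
        obtain ⟨a, ha, b, hb, hab⟩ := h i hi
        exact (hz a ha b hb hab).symm.trans (hz' a ha b hb hab)
    _ = s.card := by simp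

section

variable {v w z : V} {S : Set V}

theorem induce_connected_of_sup_edge_of_notMem
    (hS : ((G ⊔ edge v w).induce S).Connected) (hv : v ∉ S) : (G.induce S).Connected := by
  refine hS.of_adj_reachable ?_
  rintro ⟨a, ha⟩ ⟨b, hb⟩ (hab | hab)
  · exact Adj.reachable hab
  · rw [edge_adj] at hab
    rcases hab with ⟨⟨rfl, -⟩ | ⟨-, rfl⟩, -⟩
    · exact absurd ha hv
    · exact absurd hb hv

theorem induce_connected_insert_of_sup_edge (hS : ((G ⊔ edge v w).induce S).Connected)
    (hv : v ∈ S) (hzv : G.Adj z v) (hzw : G.Adj z w) :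
    (G.induce (insert z S)).Connected := by
  have hz : z ∈ insert z S := mem_insert z S
  have hS' : ((G ⊔ edge v w).induce (insert z S)).Connected := by
    rw [← singleton_union]
    exact connected_induce_union Preconnected.of_subsingleton hS.preconnected rfl hv
      (Or.inl hzv)
  refine hS'.of_adj_reachable ?_
  rintro ⟨a, ha⟩ ⟨b, hb⟩ (hab | hab)
  · exact Adj.reachable hab
  · -- the new edge `vw` is replaced by the path `v z w`
    rw [edge_adj] at hab
    rcases hab with ⟨⟨rfl, rfl⟩ | ⟨rfl, rfl⟩, -⟩
    · exact (Adj.reachable (G := G.induce _) (u := ⟨a, ha⟩) (v := ⟨z, hz⟩) hzv.symm).trans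
        (Adj.reachable (G := G.induce _) (v := ⟨b, hb⟩) hzw)
    · exact (Adj.reachable (G := G.induce _) (u := ⟨a, ha⟩) (v := ⟨z, hz⟩) hzw.symm).trans
        (Adj.reachable (G := G.induce _) (v := ⟨b, hb⟩) hzv)

end

end SimpleGraph

theorem exists_ncard_inter_add_card_le {V ι : Type*} [Finite V] [Fintype ι] {φ : ι → Set V}
    (hφ : Pairwise (Disjoint on φ)) {X Z : Set V} (hZ : Z ⊆ ⋃ i, φ i)
    (hι : Fintype.card ι ≤ X.ncard + 1) (hZX : (X.ncard + 1) ^ 2 < Z.ncard) :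
    ∃ k, (φ k ∩ X).ncard + Fintype.card ι ≤ (φ k ∩ Z).ncard := by
  by_contra! h
  have hZsum : Z.ncard ≤ ∑ k, (φ k ∩ Z).ncard := by
    calc Z.ncard = (⋃ k, φ k ∩ Z).ncard := by rw [← iUnion_inter, inter_eq_right.2 hZ]
      _ ≤ _ := ncard_iUnion_le_of_fintype _
  have hXsum : ∑ k, (φ k ∩ X).ncard ≤ X.ncard := by
    calc ∑ k, (φ k ∩ X).ncard = (⋃ k, φ k ∩ X).ncard := by
          rw [ncard_iUnion_of_finite (fun _ => toFinite _)
            fun i j hij => (hφ hij).mono inter_subset_left inter_subset_left,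
            finsum_eq_sum_of_fintype]
      _ ≤ X.ncard := ncard_le_ncard (iUnion_subset fun _ => inter_subset_right)
  have hsum : ∑ k, ((φ k ∩ Z).ncard + 1) ≤ ∑ k, ((φ k ∩ X).ncard + Fintype.card ι) :=
    Finset.sum_le_sum fun k _ => h k
  simp only [Finset.sum_add_distrib, Finset.sum_const, Finset.card_univ, smul_eq_mul] at hsum
  nlinarith

theorem IsVertexCover.isIndepSet_sdiff {V : Type*} {G : SimpleGraph V} {X : Set V}
    (hX : _root_.IsVertexCover G X) (s : Set V) : G.IsIndepSet (s \ X) := by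
  rintro a ⟨-, ha⟩ b ⟨-, hb⟩ - hab
  exact (hX hab).elim ha hb

theorem IsVertexCover.sup_edge {V : Type*} {G : SimpleGraph V} {X : Set V}
    (hX : _root_.IsVertexCover G X) {v : V} (hv : v ∈ X) (w : V) :
    _root_.IsVertexCover (G ⊔ edge v w) X := by
  rintro a b (hab | hab)
  · exact hX hab
  · rw [edge_adj] at hab
    rcases hab with ⟨⟨rfl, -⟩ | ⟨-, rfl⟩, -⟩
    · exact Or.inl hv
    · exact Or.inr hv

structure IsMinorModel_s12 {V W : Type*} (G : SimpleGraph V) (H : SimpleGraph W) (φ : W → Set V) :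
    Prop where
  nonempty : ∀ w, (φ w).Nonempty
  pairwise_disjoint : Pairwise fun w w' => Disjoint (φ w) (φ w')
  connected : ∀ w, (G.induce (φ w)).Connected
  adj : ∀ ⦃w w'⦄, H.Adj w w' → ∃ a ∈ φ w, ∃ b ∈ φ w', G.Adj a b

theorem hasMinor_iff_exists_isMinorModel {V W : Type*} {G : SimpleGraph V}
    {H : SimpleGraph W} : HasMinor G H ↔ ∃ φ, IsMinorModel_s12 G H φ :=
  ⟨fun ⟨φ, h₁, h₂, h₃, h₄⟩ => ⟨φ, h₁, h₂, h₃, h₄⟩, fun ⟨φ, h⟩ => ⟨φ, h.1, h.2, h.3, h.4⟩⟩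

theorem exists_isMinorModel_top_of_subsingleton {V W : Type*} [Subsingleton W]
    (G : SimpleGraph V) (v : V) : ∃ φ, IsMinorModel_s12 G (⊤ : SimpleGraph W) φ :=
  ⟨fun _ => {v}, fun _ => singleton_nonempty v,
    fun i j hij => absurd (Subsingleton.elim i j) hij, fun _ => ⟨Preconnected.of_subsingleton⟩,
    fun i j hij => absurd (Subsingleton.elim i j) hij⟩

namespace IsMinorModel_s12

section

variable {V W : Type*} {G G' : SimpleGraph V} {H : SimpleGraph W} {φ : W → Set V} {v w z : V}

theorem mono (hφ : IsMinorModel_s12 G H φ) (hGG' : G ≤ G') : IsMinorModel_s12 G' H φ where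
  nonempty := hφ.nonempty
  pairwise_disjoint := hφ.pairwise_disjoint
  connected i := (hφ.connected i).mono (comap_monotone _ hGG')
  adj i j hij := by
    obtain ⟨a, ha, b, hb, hab⟩ := hφ.adj hij
    exact ⟨a, ha, b, hb, hGG' hab⟩

theorem update_sdiff_singleton_s12 [DecidableEq W] (hφ : IsMinorModel_s12 G H φ) {k : W} {z : V}
    (hk : (G.induce (φ k \ {z})).Connected)
    (hadj : ∀ ⦃m⦄, H.Adj k m → ∃ a ∈ φ k \ {z}, ∃ b ∈ φ m, G.Adj a b) :
    IsMinorModel_s12 G H (update φ k (φ k \ {z})) := by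
  have hsub : ∀ i, update φ k (φ k \ {z}) i ⊆ φ i := by
    intro i
    rcases eq_or_ne i k with rfl | hik
    · simp
    · simp [hik]
  refine ⟨fun i => ?_, fun i j hij => (hφ.pairwise_disjoint hij).mono (hsub i) (hsub j),
    fun i => ?_, fun i j hij => ?_⟩
  · rcases eq_or_ne i k with rfl | hik
    · rw [update_self]
      exact hk.nonempty.elim fun x => ⟨x.1, x.2⟩
    · rw [update_of_ne hik]
      exact hφ.nonempty i
  · rcases eq_or_ne i k with rfl | hik
    · rwa [update_self]
    · rw [update_of_ne hik]
      exact hφ.connected i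
  · rcases eq_or_ne i k with rfl | hik
    · simpa [hij.ne'] using hadj hij
    rcases eq_or_ne j k with rfl | hjk
    · obtain ⟨a, ha, b, hb, hab⟩ := hadj hij.symm
      simpa [hik] using ⟨b, hb, a, ha, hab.symm⟩
    · simpa [hik, hjk] using hφ.adj hij

theorem exists_of_sup_edge (hφ : IsMinorModel_s12 (G ⊔ edge v w) H φ) (hzv : G.Adj z v)
    (hzw : G.Adj z w) (hz : ∀ i, z ∉ φ i) : ∃ ψ, IsMinorModel_s12 G H ψ := by
  classical
  set ψ : W → Set V := fun i => if v ∈ φ i then insert z (φ i) else φ i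
  have hsub : ∀ i, φ i ⊆ ψ i := fun i => by
    by_cases hv : v ∈ φ i <;> simp [ψ, hv, subset_insert]
  have hzψ : ∀ i, v ∈ φ i → z ∈ ψ i := fun i hv => by simp [ψ, hv]
  refine ⟨ψ, ⟨fun i => (hφ.nonempty i).mono (hsub i), fun i j hij => ?_, fun i => ?_,
    fun i j hij => ?_⟩⟩
  · have hφij : Disjoint (φ i) (φ j) := hφ.pairwise_disjoint hij
    show Disjoint (ψ i) (ψ j)
    rw [Set.disjoint_left]
    intro x hxi hxj
    simp only [ψ] at hxi hxj
    split_ifs at hxi hxj with hvi hvj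
    · exact Set.disjoint_left.1 hφij hvi hvj
    · rcases hxi with rfl | hxi
      · exact hz j hxj
      · exact Set.disjoint_left.1 hφij hxi hxj
    · rcases hxj with rfl | hxj
      · exact hz i hxi
      · exact Set.disjoint_left.1 hφij hxi hxj
    · exact Set.disjoint_left.1 hφij hxi hxj
  · by_cases hv : v ∈ φ i
    · rw [show ψ i = insert z (φ i) from if_pos hv]
      exact induce_connected_insert_of_sup_edge (hφ.connected i) hv hzv hzw
    · rw [show ψ i = φ i from if_neg hv]
      exact induce_connected_of_sup_edge_of_notMem (hφ.connected i) hv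
  · obtain ⟨a, ha, b, hb, hab | hab⟩ := hφ.adj hij
    · exact ⟨a, hsub i ha, b, hsub j hb, hab⟩
    · rw [edge_adj] at hab
      rcases hab with ⟨⟨rfl, rfl⟩ | ⟨rfl, rfl⟩, -⟩
      · exact ⟨z, hzψ i ha, b, hsub j hb, hzw⟩
      · exact ⟨a, hsub i ha, z, hzψ j hb, hzw.symm⟩

end

section

variable {V : Type*} [Finite V] {G : SimpleGraph V} {X Z : Set V} {t : ℕ} {φ : Fin t → Set V}

theorem exists_removable (hφ : IsMinorModel_s12 G ⊤ φ) (hX : _root_.IsVertexCover G X)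
    (hZX : Disjoint Z X) (ht : 2 ≤ t) {k : Fin t}
    (hk : (φ k ∩ X).ncard + t ≤ (φ k ∩ Z).ncard) :
    ∃ z ∈ φ k ∩ Z, (G.induce (φ k \ {z})).Connected ∧
      ∀ m ≠ k, ∃ a ∈ φ k \ {z}, ∃ b ∈ φ m, G.Adj a b := by
  have hind : G.IsIndepSet (φ k \ (φ k ∩ X)) := by
    rw [sdiff_self_inter]
    exact hX.isIndepSet_sdiff _
  have hnt : (φ k).Nontrivial := by
    rw [← one_lt_ncard_iff_nontrivial]
    have := ncard_le_ncard (inter_subset_left : φ k ∩ Z ⊆ φ k)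
    omega
  have hY := inter_nonempty_of_isIndepSet_sdiff (hφ.connected k) (hX.isIndepSet_sdiff _) hnt
  have hsep := ncard_separatingVertices_sdiff_lt (hφ.connected k) inter_subset_left hY hind
  have hsole := ncard_setOf_unique_attachment_le (G := G) (Finset.univ.erase k) (φ k) φ
    fun m hm => hφ.adj ((top_adj _ _).2 (Finset.ne_of_mem_erase hm).symm)
  rw [Finset.card_erase_of_mem (Finset.mem_univ k), Finset.card_univ, Fintype.card_fin] at hsole
  set sole := {z | ∃ m ∈ Finset.univ.erase k, ∀ a ∈ φ k, ∀ b ∈ φ m, G.Adj a b → a = z}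
  obtain ⟨z, hz, hzbad⟩ := exists_mem_notMem_of_ncard_lt_ncard (t := φ k ∩ Z)
    (s := (G.separatingVertices (φ k) \ (φ k ∩ X)) ∪ sole)
    (by have := ncard_union_le (G.separatingVertices (φ k) \ (φ k ∩ X)) sole; omega)
  refine ⟨z, hz, ?_, fun m hm => ?_⟩
  · by_contra hcut
    exact hzbad (Or.inl ⟨⟨hz.1, hcut⟩, fun hzX => Set.disjoint_left.1 hZX hz.2 hzX.2⟩)
  · by_contra! hno
    refine hzbad (Or.inr ⟨m, Finset.mem_erase.2 ⟨hm, Finset.mem_univ m⟩, fun a ha b hb hab => ?_⟩)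
    by_contra haz
    exact hno a ⟨ha, haz⟩ b hb hab

theorem exists_notMem_of_isVertexCover (hφ : IsMinorModel_s12 G ⊤ φ) (hX : _root_.IsVertexCover G X)
    (hZX : Disjoint Z X) (ht₂ : 2 ≤ t) (ht : t ≤ X.ncard + 1)
    (hZ : (X.ncard + 1) ^ 2 < Z.ncard) :
    ∃ ψ : Fin t → Set V, IsMinorModel_s12 G ⊤ ψ ∧ ∃ z ∈ Z, ∀ i, z ∉ ψ i := by
  by_cases hfree : ∃ z ∈ Z, ∀ i, z ∉ φ i
  · exact ⟨φ, hφ, hfree⟩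
  push Not at hfree
  obtain ⟨k, hk⟩ := exists_ncard_inter_add_card_le hφ.pairwise_disjoint
    (fun z hz => mem_iUnion.2 (hfree z hz)) (by rwa [Fintype.card_fin]) hZ
  rw [Fintype.card_fin] at hk
  obtain ⟨z, ⟨hzk, hzZ⟩, hconn, hadj⟩ := hφ.exists_removable hX hZX ht₂ hk
  refine ⟨_, hφ.update_sdiff_singleton_s12 hconn fun m hm => hadj m ((top_adj _ _).1 hm).symm,
    z, hzZ, fun i => ?_⟩
  rcases eq_or_ne i k with rfl | hik
  · simp
  · rw [update_of_ne hik]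
    exact Set.disjoint_left.1 (hφ.pairwise_disjoint hik.symm) hzk

end

end IsMinorModel_s12

theorem stmt12_general {V : Type u} [Fintype V]
    (G : SimpleGraph V) (X : Set V) (hX : _root_.IsVertexCover G X)
    (t : ℕ) (ht : t ≤ X.ncard + 1)
    (v w : V) (hv : v ∈ X)
    (hmany : (X.ncard + 1) ^ 2 < {z : V | z ∉ X ∧ G.Adj z v ∧ G.Adj z w}.ncard) :
    HasMinor G (⊤ : SimpleGraph (Fin t)) ↔
      HasMinor (G ⊔ fromEdgeSet {s(v, w)}) (⊤ : SimpleGraph (Fin t)) := by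
  simp only [hasMinor_iff_exists_isMinorModel]
  refine ⟨fun ⟨φ, hφ⟩ => ⟨φ, hφ.mono le_sup_left⟩, fun ⟨φ, hφ⟩ => ?_⟩
  rcases le_or_gt t 1 with ht₁ | ht₂
  · have : Subsingleton (Fin t) := Fin.subsingleton_iff_le_one.2 ht₁
    exact exists_isMinorModel_top_of_subsingleton G v
  obtain ⟨ψ, hψ, z, ⟨-, hzv, hzw⟩, hz⟩ :=
    IsMinorModel_s12.exists_notMem_of_isVertexCover (G := G ⊔ edge v w) hφ (hX.sup_edge hv w)
      (Set.disjoint_left.2 fun _ hz => hz.1) ht₂ ht hmany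
  exact hψ.exists_of_sup_edge hzv hzw hz

/-- Let `G` be a graph with vertex cover `X`, let `t ≤ |X| + 1`, and let `v, w ∈ X` be
distinct nonadjacent vertices with more than `(|X| + 1)²` common neighbors outside `X`.
Then `G` has a `K_t` minor iff the graph obtained by adding the edge `vw` does. -/
theorem stmt12 {V : Type u} [Fintype V]
    (G : SimpleGraph V) (X : Set V) (hX : _root_.IsVertexCover G X)
    (t : ℕ) (ht : t ≤ X.ncard + 1)
    (v w : V) (hv : v ∈ X) (hw : w ∈ X) (hvw : v ≠ w) (hnadj : ¬ G.Adj v w)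
    (hmany : (X.ncard + 1) ^ 2 < {z : V | z ∉ X ∧ G.Adj z v ∧ G.Adj z w}.ncard) :
    HasMinor G (⊤ : SimpleGraph (Fin t)) ↔
      HasMinor (G ⊔ fromEdgeSet {s(v, w)}) (⊤ : SimpleGraph (Fin t)) :=
  stmt12_general G X hX t ht v w hv hmany
end

section
/- Let G be a graph with vertex cover X such that (i) no vertex of V(G) \ X is simplicial, and (ii) for every pair of distinct nonadjacent vertices v, w ∈ X, at most (|X| + 1)² vertices of V(G) \ X are adjacent to both v and w. Then |V(G)| ≤ (|X| + 1)⁴. -/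
open SimpleGraph

universe u

/-- `s` is a simplicial vertex of `G`: its open neighborhood induces a clique. -/
def IsSimplicial {V : Type*} (G : SimpleGraph V) (s : V) : Prop :=
  ∀ ⦃a b : V⦄, G.Adj s a → G.Adj s b → a ≠ b → G.Adj a b

theorem Set.ncard_biUnion_le_ncard_mul {ι α : Type*} {t : Set ι} (ht : t.Finite)
    (s : ι → Set α) {n : ℕ} (hs : ∀ i ∈ t, (s i).ncard ≤ n) :
    (⋃ i ∈ t, s i).ncard ≤ t.ncard * n := by
  have hbiUnion : (⋃ i ∈ t, s i) = ⋃ i ∈ ht.toFinset, s i := by simp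
  rw [hbiUnion, Set.ncard_eq_toFinset_card t ht, ← smul_eq_mul]
  exact (ht.toFinset.set_ncard_biUnion_le s).trans
    (Finset.sum_le_card_nsmul _ _ _ fun i hi ↦ hs i (ht.mem_toFinset.mp hi))

section

variable {V : Type*} {G : SimpleGraph V} {X : Set V}

theorem IsVertexCover.exists_nonadj_neighbors_of_not_isSimplicial
    (hX : _root_.IsVertexCover G X) {s : V} (hs : s ∉ X) (hns : ¬ IsSimplicial G s) :
    ∃ v ∈ X, ∃ w ∈ X, v ≠ w ∧ ¬ G.Adj v w ∧ G.Adj s v ∧ G.Adj s w := by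
  simp only [IsSimplicial, not_forall] at hns
  obtain ⟨v, w, hsv, hsw, hvw, hnadj⟩ := hns
  exact ⟨v, (hX hsv).resolve_left hs, w, (hX hsw).resolve_left hs, hvw, hnadj, hsv, hsw⟩

theorem IsVertexCover.compl_subset_biUnion_commonNeighbors (hX : _root_.IsVertexCover G X)
    (hnotSimplicial : ∀ s ∉ X, ¬ IsSimplicial G s) :
    Xᶜ ⊆ ⋃ p ∈ {p ∈ X ×ˢ X | p.1 ≠ p.2 ∧ ¬ G.Adj p.1 p.2},
      {z | z ∉ X ∧ G.Adj z p.1 ∧ G.Adj z p.2} := by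
  intro s hs
  obtain ⟨v, hv, w, hw, hvw, hnadj, hsv, hsw⟩ :=
    hX.exists_nonadj_neighbors_of_not_isSimplicial hs (hnotSimplicial s hs)
  exact Set.mem_biUnion (x := (v, w)) ⟨⟨hv, hw⟩, hvw, hnadj⟩ ⟨hs, hsv, hsw⟩

end

/-- Let `G` be a graph with vertex cover `X` such that (i) no vertex outside `X` is
simplicial, and (ii) every pair of distinct nonadjacent vertices of `X` has at most
`(|X| + 1)²` common neighbors outside `X`. Then `|V(G)| ≤ (|X| + 1)⁴`. -/
theorem stmt14 {V : Type u} [Fintype V] (G : SimpleGraph V) (X : Set V)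
    (hX : _root_.IsVertexCover G X)
    (h1 : ∀ s : V, s ∉ X → ¬ IsSimplicial G s)
    (h2 : ∀ v ∈ X, ∀ w ∈ X, v ≠ w → ¬ G.Adj v w →
      {z : V | z ∉ X ∧ G.Adj z v ∧ G.Adj z w}.ncard ≤ (X.ncard + 1) ^ 2) :
    Fintype.card V ≤ (X.ncard + 1) ^ 4 := by
  set n := X.ncard
  set P := {p ∈ X ×ˢ X | p.1 ≠ p.2 ∧ ¬ G.Adj p.1 p.2}
  have hP : P.ncard ≤ n * n :=
    (Set.ncard_le_ncard (Set.sep_subset _ _) (Set.toFinite _)).trans Set.ncard_prod.le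
  have hcompl : Xᶜ.ncard ≤ n * n * (n + 1) ^ 2 :=
    calc Xᶜ.ncard ≤ (⋃ p ∈ P, {z | z ∉ X ∧ G.Adj z p.1 ∧ G.Adj z p.2}).ncard :=
          Set.ncard_le_ncard (hX.compl_subset_biUnion_commonNeighbors h1) (Set.toFinite _)
      _ ≤ P.ncard * (n + 1) ^ 2 := Set.ncard_biUnion_le_ncard_mul (Set.toFinite _) _
          fun p hp ↦ h2 _ hp.1.1 _ hp.1.2 hp.2.1 hp.2.2
      _ ≤ n * n * (n + 1) ^ 2 := Nat.mul_le_mul_right _ hP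
  have hsplit : n + Xᶜ.ncard = Fintype.card V := by
    rw [Set.ncard_add_ncard_compl, Nat.card_eq_fintype_card]
  nlinarith
end

section
/- Let G be a connected graph on at least 3 vertices and let t ≥ 1. The following are equivalent: (a) G has a spanning tree with at least t leaves; (b) G contains the star K_{1,t} as a minor; (c) G has a connected dominating set of size at most |V(G)| − t. -/
/-!
(a) ⇒ (c): in a tree on at least three vertices no two leaves are adjacent, so deleting `t` leaves
keeps the tree connected and each deleted leaf keeps its neighbour. (c) ⇒ (a): a spanning tree of
`G[D]` together with one edge from each vertex outside `D` into `D` has every vertex outside `D` as a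
leaf. (c) ⇒ (b): `D` and `t` singletons outside `D` are the branch sets of a star. (b) ⇒ (c): since
`G` is connected, the branch sets of a star model can be grown until they cover `V`; then removing
from each leaf branch set `L i` a leaf of a spanning tree of `G[L i]`, other than the vertex `b i`
attached to the centre unless `L i = {b i}`, leaves a connected dominating set.
-/

open SimpleGraph

universe u v

namespace SimpleGraph

variable {V : Type u} {G T : SimpleGraph V}

def leafSet (T : SimpleGraph V) : Set V := {x | (T.neighborSet x).ncard = 1}

lemma mem_leafSet {x : V} : x ∈ T.leafSet ↔ ∃ y, T.neighborSet x = {y} := Set.ncard_eq_one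

lemma eq_of_mem_leafSet {x y z : V} (hx : x ∈ T.leafSet) (hy : T.Adj x y) (hz : T.Adj x z) :
    y = z := by
  obtain ⟨c, hc⟩ := mem_leafSet.mp hx
  have hy' : y ∈ T.neighborSet x := hy
  have hz' : z ∈ T.neighborSet x := hz
  rw [hc] at hy' hz'
  exact hy'.trans hz'.symm

lemma Connected.not_adj_of_mem_leafSet [Finite V] (hT : T.Connected) (hcard : 3 ≤ Nat.card V)
    {u w : V} (hu : u ∈ T.leafSet) (hw : w ∈ T.leafSet) : ¬T.Adj u w := by
  intro huw
  have hne : ({u, w} : Set V) ≠ Set.univ := by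
    intro h
    have := Set.ncard_insert_le u {w}
    rw [h, Set.ncard_univ, Set.ncard_singleton] at this
    omega
  obtain ⟨z, hz⟩ := (Set.ne_univ_iff_exists_notMem _).mp hne
  obtain ⟨d, -, hd, hd'⟩ := (hT.preconnected u z).some.exists_boundary_dart {u, w} (by simp) hz
  rcases hd with h | h
  · exact hd' (Or.inr (eq_of_mem_leafSet hu (h ▸ d.adj) huw))
  · exact hd' (Or.inl (eq_of_mem_leafSet hw (h ▸ d.adj) huw.symm))

lemma Walk.IsPath.notMem_leafSet {a b x : V} {p : T.Walk a b} (hp : p.IsPath)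
    (hx : x ∈ p.support) (hxa : x ≠ a) (hxb : x ≠ b) : x ∉ T.leafSet := by
  intro hleaf
  obtain ⟨q, r, rfl⟩ := Walk.mem_support_iff_exists_append.mp hx
  have hq : ¬q.Nil := Walk.not_nil_of_ne hxa.symm
  have hr : ¬r.Nil := Walk.not_nil_of_ne hxb
  have heq : q.penultimate = r.snd :=
    eq_of_mem_leafSet hleaf (q.adj_penultimate hq).symm (r.adj_snd hr)
  have hnodup := hp.support_nodup
  rw [Walk.support_append] at hnodup
  exact List.disjoint_of_nodup_append hnodup (q.getVert_mem_support _)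
    (heq ▸ r.snd_mem_tail_support hr)

section LeafRemoval

variable [Finite V] (hT : T.Connected) (hcard : 3 ≤ Nat.card V) {X : Set V}
  (hX : X ⊆ T.leafSet)
include hT hcard hX

lemma Connected.exists_adj_notMem_of_subset_leafSet {x : V} (hx : x ∈ X) :
    ∃ y ∉ X, T.Adj x y := by
  obtain ⟨y, hy⟩ := mem_leafSet.mp (hX hx)
  have hxy : T.Adj x y := by rw [← mem_neighborSet, hy]; rfl
  exact ⟨y, fun hyX => hT.not_adj_of_mem_leafSet hcard (hX hx) (hX hyX) hxy, hxy⟩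

lemma Connected.induce_compl_of_subset_leafSet : (T.induce Xᶜ).Connected := by
  classical
  obtain ⟨v⟩ := hT.nonempty
  have hne : Nonempty (Xᶜ : Set V) := by
    by_cases hv : v ∈ X
    · obtain ⟨y, hy, -⟩ := hT.exists_adj_notMem_of_subset_leafSet hcard hX hv
      exact ⟨⟨y, hy⟩⟩
    · exact ⟨⟨v, hv⟩⟩
  refine (connected_iff _).mpr ⟨?_, hne⟩
  rintro ⟨a, ha⟩ ⟨b, hb⟩
  obtain ⟨p, hp⟩ := (hT.preconnected a b).some.toPath
  refine ⟨p.induce Xᶜ fun x hx hxX => ?_⟩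
  by_cases hxa : x = a
  · exact ha (hxa ▸ hxX)
  by_cases hxb : x = b
  · exact hb (hxb ▸ hxX)
  exact hp.notMem_leafSet hx hxa hxb (hX hxX)

end LeafRemoval

def IsConnectedDominating (G : SimpleGraph V) (D : Set V) : Prop :=
  (G.induce D).Connected ∧ ∀ x, x ∉ D → ∃ y ∈ D, G.Adj x y

lemma isConnectedDominating_compl_of_subset_leafSet [Finite V] (hTG : T ≤ G) (hT : T.Connected)
    (hcard : 3 ≤ Nat.card V) {X : Set V} (hX : X ⊆ T.leafSet) : G.IsConnectedDominating Xᶜ := by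
  refine ⟨(hT.induce_compl_of_subset_leafSet hcard hX).mono fun _ _ h => hTG h, fun x hx => ?_⟩
  obtain ⟨y, hy, hxy⟩ := hT.exists_adj_notMem_of_subset_leafSet hcard hX (not_not.mp hx)
  exact ⟨y, hy, hTG hxy⟩

namespace IsConnectedDominating

variable {D : Set V}

lemma le_ncard_compl [Finite V] (hD : G.IsConnectedDominating D) {t : ℕ}
    (h : D.ncard ≤ Nat.card V - t) : t ≤ Dᶜ.ncard := by
  have := (Set.nonempty_coe_sort.mp hD.1.nonempty).ncard_pos
  rw [Set.ncard_compl]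
  omega

lemma exists_isTree_le_compl_subset_leafSet (hD : G.IsConnectedDominating D) :
    ∃ T ≤ G, T.IsTree ∧ Dᶜ ⊆ T.leafSet := by
  obtain ⟨⟨r, hr⟩⟩ := hD.1.nonempty
  choose! f hfD hfadj using hD.2
  -- Keep the edges inside `D` and one edge `x f(x)` for each `x ∉ D`: in any spanning tree of
  -- this subgraph, the vertices outside `D` have degree one.
  let H : SimpleGraph V :=
    G ⊓ fromRel fun x y => (x ∈ D ∧ y ∈ D) ∨ (x ∉ D ∧ y = f x)
  have hH_adj_f : ∀ x ∉ D, H.Adj x (f x) := fun x hx =>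
    ⟨hfadj x hx, (hfadj x hx).ne, Or.inl (Or.inr ⟨hx, rfl⟩)⟩
  have hH_eq_f : ∀ x ∉ D, ∀ y, H.Adj x y → y = f x := by
    rintro x hx y ⟨-, -, (⟨hxD, -⟩ | ⟨-, hy⟩) | (⟨-, hxD⟩ | ⟨hyD, rfl⟩)⟩
    · exact absurd hxD hx
    · exact hy
    · exact absurd hxD hx
    · exact absurd (hfD y hyD) hx
  let incl : G.induce D →g H :=
    ⟨Subtype.val, fun {a b} h => ⟨h, G.ne_of_adj h, Or.inl (Or.inl ⟨a.2, b.2⟩)⟩⟩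
  have hreach_D : ∀ x ∈ D, H.Reachable x r := fun x hx =>
    (hD.1.preconnected ⟨x, hx⟩ ⟨r, hr⟩).map incl
  have hH : H.Connected := by
    refine (connected_iff _).mpr ⟨fun x y => ?_, ⟨r⟩⟩
    suffices hxr : ∀ x, H.Reachable x r from (hxr x).trans (hxr y).symm
    intro x
    by_cases hx : x ∈ D
    · exact hreach_D x hx
    · exact (hH_adj_f x hx).reachable.trans (hreach_D _ (hfD x hx))
  obtain ⟨T, hTH, hT⟩ := hH.exists_isTree_le
  refine ⟨T, hTH.trans inf_le_left, hT, fun x hx => mem_leafSet.mpr ⟨f x, ?_⟩⟩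
  have hTf : ∀ y, T.Adj x y → y = f x := fun y hy => hH_eq_f x hx y (hTH hy)
  have hne : x ≠ f x := fun h => hx (h ▸ hfD x hx)
  obtain ⟨w⟩ := hT.connected x (f x)
  have hx_adj := w.adj_snd (Walk.not_nil_of_ne hne)
  have hsnd : w.snd = f x := hTf _ hx_adj
  ext y
  exact ⟨hTf y, by rintro rfl; exact hsnd ▸ hx_adj⟩

end IsConnectedDominating

lemma exists_adj_of_connected_induce {S : Set V} (hS : (G.induce S).Connected) {x y : V}
    (hx : x ∈ S) (hy : y ∈ S) (hxy : x ≠ y) : ∃ z ∈ S, G.Adj x z := by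
  obtain ⟨p⟩ := hS.preconnected ⟨x, hx⟩ ⟨y, hy⟩
  exact ⟨_, p.snd.2, p.adj_snd (Walk.not_nil_of_ne fun h => hxy (congrArg Subtype.val h))⟩

lemma exists_preconnected_induce_diff_singleton [Finite V] {S : Set V}
    (hS : (G.induce S).Connected) {b : V} (hb : b ∈ S) :
    ∃ x ∈ S, (x = b → S = {b}) ∧ (G.induce (S \ {x})).Preconnected := by
  classical
  rcases Set.eq_singleton_or_nontrivial hb with rfl | hnt
  · refine ⟨b, rfl, fun _ => rfl, ?_⟩
    have : IsEmpty ↥(({b} : Set V) \ {b}) := by simp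
    exact Preconnected.of_subsingleton
  have := hnt.coe_sort
  have := Fintype.ofFinite S
  obtain ⟨T, hTS, hT⟩ := hS.exists_isTree_le
  obtain ⟨u₁, u₂, hne, hu₁, hu₂⟩ := hT.exists_ne_and_degree_eq_one
  obtain ⟨x, hxb, hx⟩ : ∃ x, x ≠ ⟨b, hb⟩ ∧ T.degree x = 1 := by
    by_cases h : u₁ = ⟨b, hb⟩
    · exact ⟨u₂, h ▸ hne.symm, hu₂⟩
    · exact ⟨u₁, h, hu₁⟩
  refine ⟨x, x.2, fun h => absurd (Subtype.ext h) hxb, ?_⟩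
  let f : (G.induce S).induce {x}ᶜ →g G.induce (S \ {x.1}) :=
    ⟨fun z => ⟨z.1.1, z.1.2, fun h => z.2 (Subtype.ext h)⟩, fun h => h⟩
  have hf : Function.Surjective f := fun z =>
    ⟨⟨⟨z.1, z.2.1⟩, fun h => z.2.2 (congrArg Subtype.val h)⟩, rfl⟩
  have hT' := (hT.connected.induce_compl_singleton_of_degree_eq_one hx).preconnected
  have hle : T.induce {x}ᶜ ≤ (G.induce S).induce {x}ᶜ := fun _ _ h => hTS h
  exact (hT'.mono hle).map f hf

end SimpleGraph

variable {V : Type u} {W : Type v} {G : SimpleGraph V} {H : SimpleGraph W}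

structure IsMinorModel_s16 (G : SimpleGraph V) (H : SimpleGraph W) (φ : W → Set V) : Prop where
  nonempty : ∀ w, (φ w).Nonempty
  pairwise_disjoint : Pairwise fun w w' => Disjoint (φ w) (φ w')
  connected : ∀ w, (G.induce (φ w)).Connected
  exists_adj : ∀ ⦃w w'⦄, H.Adj w w' → ∃ a ∈ φ w, ∃ b ∈ φ w', G.Adj a b

lemma hasMinor_iff : HasMinor G H ↔ ∃ φ, IsMinorModel_s16 G H φ :=
  ⟨fun ⟨φ, h₁, h₂, h₃, h₄⟩ => ⟨φ, h₁, h₂, h₃, h₄⟩, fun ⟨φ, h⟩ => ⟨φ, h.1, h.2, h.3, h.4⟩⟩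

namespace IsMinorModel_s16

variable {φ : W → Set V}

lemma mem_update_insert [DecidableEq W] {w w' : W} {v x : V} :
    x ∈ Function.update φ w (insert v (φ w)) w' ↔ x ∈ φ w' ∨ (w' = w ∧ x = v) := by
  rcases eq_or_ne w' w with rfl | h <;> simp [*, or_comm]

lemma subset_update_insert [DecidableEq W] (w : W) (v : V) (w' : W) :
    φ w' ⊆ Function.update φ w (insert v (φ w)) w' :=
  fun _ hx => mem_update_insert.mpr (Or.inl hx)

lemma update_insert [DecidableEq W] (hφ : IsMinorModel_s16 G H φ) {w : W} {a v : V} (ha : a ∈ φ w)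
    (hv : v ∉ ⋃ w, φ w) (hav : G.Adj a v) :
    IsMinorModel_s16 G H (Function.update φ w (insert v (φ w))) := by
  have hv' : ∀ w', v ∉ φ w' := fun w' h => hv (Set.mem_iUnion_of_mem w' h)
  refine ⟨fun w' => ?_, fun w₁ w₂ hne => ?_, fun w' => ?_, fun w₁ w₂ hadj => ?_⟩
  · exact (hφ.nonempty w').mono (subset_update_insert w v w')
  · refine Set.disjoint_left.mpr fun x h₁ h₂ => ?_
    rw [mem_update_insert] at h₁ h₂
    rcases h₁ with h₁ | ⟨rfl, rfl⟩ <;> rcases h₂ with h₂ | ⟨rfl, hx⟩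
    · exact Set.disjoint_left.mp (hφ.pairwise_disjoint hne) h₁ h₂
    · exact hv' _ (hx ▸ h₁)
    · exact hv' _ h₂
    · exact hne rfl
  · rcases eq_or_ne w' w with rfl | h
    · rw [Function.update_self, ← Set.union_singleton]
      exact connected_induce_union (hφ.connected w').preconnected Preconnected.of_subsingleton
        ha rfl hav
    · rw [Function.update_of_ne h]
      exact hφ.connected w'
  · obtain ⟨a, ha, b, hb, hab⟩ := hφ.exists_adj hadj
    exact ⟨a, subset_update_insert w v w₁ ha, b, subset_update_insert w v w₂ hb, hab⟩

lemma exists_iUnion_eq_univ [Finite V] [Nonempty W] (hG : G.Connected)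
    (hφ : IsMinorModel_s16 G H φ) : ∃ ψ, IsMinorModel_s16 G H ψ ∧ ⋃ w, ψ w = Set.univ := by
  classical
  induction h : (⋃ w, φ w)ᶜ.ncard using Nat.strong_induction_on generalizing φ with
  | _ n ih =>
    by_cases hcov : ⋃ w, φ w = Set.univ
    · exact ⟨φ, hφ, hcov⟩
    obtain ⟨u, hu⟩ := (Set.ne_univ_iff_exists_notMem _).mp hcov
    obtain ⟨w₀⟩ := ‹Nonempty W›
    obtain ⟨a₀, ha₀⟩ := hφ.nonempty w₀
    obtain ⟨d, -, hd, hd'⟩ := (hG.preconnected a₀ u).some.exists_boundary_dart _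
      (Set.mem_iUnion_of_mem w₀ ha₀) hu
    obtain ⟨w, hw⟩ := Set.mem_iUnion.mp hd
    refine ih _ ?_ (hφ.update_insert hw hd' d.adj) rfl
    rw [← h]
    refine Set.ncard_lt_ncard ((Set.ssubset_iff_of_subset ?_).mpr ⟨d.snd, hd', ?_⟩)
    · exact Set.compl_subset_compl.mpr (Set.iUnion_mono (subset_update_insert w d.snd))
    · exact fun h => h (Set.mem_iUnion_of_mem w (mem_update_insert.mpr (Or.inr ⟨rfl, rfl⟩)))

lemma exists_injective_isConnectedDominating_compl_range [Finite V] {ι : Type*}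
    {φ : Fin 1 ⊕ ι → Set V} (hφ : IsMinorModel_s16 G (completeBipartiteGraph (Fin 1) ι) φ)
    (hcover : ⋃ w, φ w = Set.univ) :
    ∃ x : ι → V, Function.Injective x ∧ G.IsConnectedDominating (Set.range x)ᶜ := by
  set C := φ (.inl 0)
  have hCL : ∀ i, Disjoint C (φ (.inr i)) := fun i => hφ.pairwise_disjoint Sum.inl_ne_inr
  choose a ha b hb hab using fun i => hφ.exists_adj (w := .inl 0) (w' := .inr i) (by simp)
  choose x hxL hxb hxconn using fun i =>
    exists_preconnected_induce_diff_singleton (hφ.connected (.inr i)) (hb i)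
  have hmem_x : ∀ i j, x j ∈ φ (.inr i) → j = i := fun i j h => by_contra fun hne =>
    Set.disjoint_left.mp (hφ.pairwise_disjoint (Sum.inr_injective.ne hne)) (hxL j) h
  have hCD : C ⊆ (Set.range x)ᶜ := by
    rintro v hv ⟨i, rfl⟩
    exact Set.disjoint_left.mp (hCL i) hv (hxL i)
  have hLD : ∀ i, φ (.inr i) \ {x i} ⊆ (Set.range x)ᶜ := by
    rintro i v ⟨hv, hvx⟩ ⟨j, rfl⟩
    exact hvx (congrArg x (hmem_x i j hv))
  obtain ⟨r, hr⟩ := hφ.nonempty (.inl 0)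
  refine ⟨x, fun i j h => (hmem_x i j (h ▸ hxL i)).symm,
    induce_connected_of_patches r (hCD hr) fun {v} hv => ?_, fun v hv => ?_⟩
  · obtain ⟨w, hw⟩ := Set.iUnion_eq_univ_iff.mp hcover v
    rcases w with j | i
    · rw [Subsingleton.elim j 0] at hw
      exact ⟨C, hCD, hr, hw, (hφ.connected _).preconnected _ _⟩
    · have hvx : v ≠ x i := fun h => hv ⟨i, h.symm⟩
      have hbx : b i ≠ x i := fun h => hvx <| by
        rw [hxb i h.symm] at hw
        exact hw.trans h
      refine ⟨C ∪ (φ (.inr i) \ {x i}), Set.union_subset hCD (hLD i), Or.inl hr,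
        Or.inr ⟨hw, hvx⟩, ?_⟩
      exact (connected_induce_union (hφ.connected _).preconnected (hxconn i) (ha i)
        ⟨hb i, hbx⟩ (hab i)).preconnected _ _
  · obtain ⟨i, rfl⟩ := not_not.mp hv
    by_cases hbx : x i = b i
    · exact ⟨a i, hCD (ha i), hbx ▸ (hab i).symm⟩
    · obtain ⟨z, hz, hxz⟩ := exists_adj_of_connected_induce (hφ.connected _) (hxL i) (hb i) hbx
      exact ⟨z, hLD i ⟨hz, (G.ne_of_adj hxz).symm⟩, hxz⟩

end IsMinorModel_s16

namespace SimpleGraph.IsConnectedDominating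

variable {D : Set V}

lemma hasMinor_star {ι : Type*} (hD : G.IsConnectedDominating D) {x : ι → V}
    (hx : Function.Injective x) (hxD : ∀ i, x i ∉ D) : HasMinor G (completeBipartiteGraph (Fin 1) ι) := by
  refine hasMinor_iff.mpr ⟨Sum.elim (fun _ => D) fun i => {x i}, ⟨?_, ?_, ?_, ?_⟩⟩
  · rintro (_ | i)
    · exact Set.nonempty_coe_sort.mp hD.1.nonempty
    · exact Set.singleton_nonempty _
  · rintro (j | i) (j' | i') hne
    · exact absurd (congrArg Sum.inl (Subsingleton.elim j j')) hne
    · exact Set.disjoint_singleton_right.mpr (hxD i')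
    · exact Set.disjoint_singleton_left.mpr (hxD i)
    · exact Set.disjoint_singleton.mpr (hx.ne fun h => hne (congrArg Sum.inr h))
  · rintro (_ | i)
    · exact hD.1
    · show (G.induce {x i}).Connected
      exact (connected_iff _).mpr ⟨Preconnected.of_subsingleton, inferInstance⟩
  · rintro (j | i) (j' | i') hadj
    · simp at hadj
    · obtain ⟨y, hy, hxy⟩ := hD.2 (x i') (hxD i')
      exact ⟨y, hy, x i', rfl, hxy.symm⟩
    · obtain ⟨y, hy, hxy⟩ := hD.2 (x i) (hxD i)
      exact ⟨x i, rfl, y, hy, hxy⟩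
    · simp at hadj

lemma hasMinor_star_of_le_ncard_compl [Finite V] (hD : G.IsConnectedDominating D) {t : ℕ}
    (ht : t ≤ Dᶜ.ncard) : HasMinor G (completeBipartiteGraph (Fin 1) (Fin t)) := by
  obtain ⟨X, hX, hXt⟩ := Set.exists_subset_card_eq ht
  let e : X ≃ Fin t := Finite.equivFinOfCardEq (by rw [Nat.card_coe_set_eq, hXt])
  exact hD.hasMinor_star (Subtype.val_injective.comp e.symm.injective) fun i => hX (e.symm i).2

end SimpleGraph.IsConnectedDominating

theorem stmt16_general {V : Type u} [Fintype V] (G : SimpleGraph V)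
    (hconn : G.Connected) (hcard : 3 ≤ Fintype.card V) (t : ℕ) :
    List.TFAE
      [ (∃ T : SimpleGraph V, T ≤ G ∧ T.Connected ∧ T.IsAcyclic ∧
          t ≤ {x : V | (T.neighborSet x).ncard = 1}.ncard),
        HasMinor G (completeBipartiteGraph (Fin 1) (Fin t)),
        (∃ D : Set V, (G.induce D).Connected ∧
          (∀ x : V, x ∉ D → ∃ y ∈ D, G.Adj x y) ∧
          D.ncard ≤ Fintype.card V - t) ] := by
  simp only [← Nat.card_eq_fintype_card] at hcard ⊢
  tfae_have 1 → 3 := by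
    rintro ⟨T, hTG, hT, -, hleaves⟩
    obtain ⟨X, hX, rfl⟩ := Set.exists_subset_card_eq hleaves
    have hD := isConnectedDominating_compl_of_subset_leafSet hTG hT hcard hX
    exact ⟨Xᶜ, hD.1, hD.2, (Set.ncard_compl X).le⟩
  tfae_have 3 → 1 := by
    rintro ⟨D, hD, hdom, hDcard⟩
    obtain ⟨T, hTG, hT, hleaf⟩ :=
      IsConnectedDominating.exists_isTree_le_compl_subset_leafSet ⟨hD, hdom⟩
    exact ⟨T, hTG, hT.connected, hT.isAcyclic,
      (IsConnectedDominating.le_ncard_compl ⟨hD, hdom⟩ hDcard).trans (Set.ncard_le_ncard hleaf)⟩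
  tfae_have 3 → 2 := fun ⟨D, hD, hdom, hDcard⟩ =>
    IsConnectedDominating.hasMinor_star_of_le_ncard_compl ⟨hD, hdom⟩
      (IsConnectedDominating.le_ncard_compl ⟨hD, hdom⟩ hDcard)
  tfae_have 2 → 3 := by
    intro h
    obtain ⟨φ, hφ⟩ := hasMinor_iff.mp h
    obtain ⟨ψ, hψ, hcover⟩ := hφ.exists_iUnion_eq_univ hconn
    obtain ⟨x, hx, hD⟩ := hψ.exists_injective_isConnectedDominating_compl_range hcover
    exact ⟨_, hD.1, hD.2, by rw [Set.ncard_compl, Set.ncard_range_of_injective hx, Nat.card_fin]⟩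
  tfae_finish

/-- Let `G` be a connected graph on at least 3 vertices and let `t ≥ 1`.
The following are equivalent:
(a) `G` has a spanning tree with at least `t` leaves;
(b) `G` contains the star `K_{1,t}` as a minor;
(c) `G` has a connected dominating set of size at most `|V(G)| - t`. -/
theorem stmt16 {V : Type u} [Fintype V] (G : SimpleGraph V)
    (hconn : G.Connected) (hcard : 3 ≤ Fintype.card V) (t : ℕ) (ht : 1 ≤ t) :
    List.TFAE
      [ (∃ T : SimpleGraph V, T ≤ G ∧ T.Connected ∧ T.IsAcyclic ∧
          t ≤ {x : V | (T.neighborSet x).ncard = 1}.ncard),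
        HasMinor G (completeBipartiteGraph (Fin 1) (Fin t)),
        (∃ D : Set V, (G.induce D).Connected ∧
          (∀ x : V, x ∉ D → ∃ y ∈ D, G.Adj x y) ∧
          D.ncard ≤ Fintype.card V - t) ] :=
  stmt16_general G hconn hcard t
end
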